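/- arXiv:0805.1026 — 10 statements merged into one kernel-verified Lean document; each statement's English description precedes it below -/
import Mathlib

section
/- Suppose the linear functional c satisfies the σ-ordering condition, i.e. ⟨c,u(σ 1)⟩ > ⟨c,u(σ 2)⟩ > ... > ⟨c,u(σ k)⟩ and ⟨c,u(σ k)⟩ > ⟨c,u j⟩ for every index j not in the range of σ. Then the point p_σ = Σ_{i=1}^k α_i u(σ i) is an extreme point (vertex) of the k-ordertope P_k. (This is the 'if' direction of Theorem 2.1.) -/
open scoped RealInnerProductSpace

/-!
Scores `γ j = ⟪c, u j⟫` are maximised over the generators `p_τ` uniquely at `p_σ`, and a unique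
maximiser of a linear functional on a set is an extreme point of its convex hull. Extend `α` by
zero to a weight `w` on all indices and `τ` to a permutation `π` with `π ∘ σ = τ`; then
`⟪c, p_τ⟫ = ∑ j, w j * γ (π j)`. Both `w` and `γ` rank the indices `σ 0, σ 1, …` first, in this
order, so they monovary and the rearrangement inequality gives `⟪c, p_τ⟫ ≤ ⟪c, p_σ⟫`. Equality
would make `w` monovary with `γ ∘ π`, which ranks `π⁻¹ ∘ σ` first; two monovarying rankings
coincide, forcing `τ = σ`.
-/

open Function Set

section HalfSpace

variable {𝕜 E : Type*} [Field 𝕜] [LinearOrder 𝕜] [IsStrictOrderedRing 𝕜]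
  [AddCommGroup E] [Module 𝕜 E]

theorem convex_insert_halfSpace_lt (f : E →ₗ[𝕜] 𝕜) (p : E) :
    Convex 𝕜 (insert p {x | f x < f p}) := by
  refine convex_iff_forall_pos.2 fun x hx y hy a b ha hb hab => ?_
  have hcomb : f (a • x + b • y) = f p + a * (f x - f p) + b * (f y - f p) := by
    simp only [map_add, map_smul, smul_eq_mul]
    linear_combination (f p) * hab
  rcases hx with rfl | hx <;> rcases hy with rfl | hy
  · left
    rw [← add_smul, hab, one_smul]
  all_goals
    right
    change _ < _
    rw [hcomb]
  · nlinarith [mul_pos hb (sub_pos.2 hy)]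
  · nlinarith [mul_pos ha (sub_pos.2 hx)]
  · nlinarith [mul_pos ha (sub_pos.2 hx), mul_pos hb (sub_pos.2 hy)]

theorem mem_extremePoints_convexHull_of_forall_lt (f : E →ₗ[𝕜] 𝕜) {S : Set E} {p : E}
    (hp : p ∈ S) (hlt : ∀ y ∈ S, y ≠ p → f y < f p) :
    p ∈ (convexHull 𝕜 S).extremePoints 𝕜 := by
  have hK := convex_insert_halfSpace_lt f p
  have hSK : S ⊆ insert p {x | f x < f p} := fun y hy =>
    (eq_or_ne y p).imp id (hlt y hy)
  have hext : p ∈ (insert p {x | f x < f p}).extremePoints 𝕜 := by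
    rw [hK.mem_extremePoints_iff_convex_sdiff,
      insert_sdiff_self_of_notMem (s := {x | f x < f p}) (lt_irrefl _)]
    exact ⟨mem_insert _ _, convex_halfSpace_lt f.isLinear _⟩
  exact inter_extremePoints_subset_extremePoints_of_subset (convexHull_min hSK hK)
    ⟨subset_convexHull 𝕜 S hp, hext⟩

end HalfSpace

/-- The paper's σ-ordering condition for the scores `f`. -/
def IsTopRanking {ι α : Type*} [Preorder α] {k : ℕ} (f : ι → α) (σ : Fin k → ι) : Prop :=
  StrictAnti (f ∘ σ) ∧ ∀ j ∉ range σ, ∀ i, f j < f (σ i)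

namespace IsTopRanking

variable {ι α : Type*} [Preorder α] {k : ℕ} {f g : ι → α} {σ τ : Fin k → ι}

theorem injective (h : IsTopRanking f σ) : Injective σ :=
  h.1.injective.of_comp

theorem lt_of_forall_ne (h : IsTopRanking f σ) {x : ι} {b : Fin k}
    (hx : ∀ a ≤ b, x ≠ σ a) : f x < f (σ b) := by
  by_cases hxσ : x ∈ range σ
  · obtain ⟨a, rfl⟩ := hxσ
    exact h.1 (lt_of_not_ge fun hab => hx a hab rfl)
  · exact h.2 x hxσ b

theorem comp_perm (h : IsTopRanking f σ) (π : Equiv.Perm ι) :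
    IsTopRanking (f ∘ π) (π.symm ∘ σ) := by
  refine ⟨by simpa [comp_def] using h.1, fun j hj i => ?_⟩
  have hπj : π j ∉ range σ := fun ⟨a, ha⟩ => hj ⟨a, by simp [ha]⟩
  simpa using h.2 (π j) hπj i

theorem monovary (hf : IsTopRanking f σ) (hf' : ∀ i ∉ range σ, ∀ j ∉ range σ, f i = f j)
    (hg : IsTopRanking g σ) : Monovary f g := by
  intro i j hij
  by_cases hj : j ∈ range σ
  · obtain ⟨b, rfl⟩ := hj
    refine (hf.lt_of_forall_ne fun a hab hia => ?_).le
    subst hia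
    exact (hg.1.antitone hab).not_gt hij
  · have hi : i ∉ range σ := by
      rintro ⟨a, rfl⟩
      exact (hg.2 j hj a).not_gt hij
    exact (hf' i hi j hj).le

theorem eq_of_monovary (hf : IsTopRanking f σ) (hg : IsTopRanking g τ) (h : Monovary f g) :
    σ = τ := by
  funext b
  induction b using WellFoundedLT.induction with
  | _ b ih =>
    by_contra hne
    -- at the first index where they differ, each ranking lists something the other has not
    have hnew : ∀ {σ' τ' : Fin k → ι}, Injective τ' → (∀ a < b, σ' a = τ' a) →
        σ' b ≠ τ' b → ∀ a ≤ b, τ' b ≠ σ' a := by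
      intro σ' τ' hτ' hagree hb a hab heq
      rcases hab.lt_or_eq with hab | rfl
      · exact hab.ne (hτ' (heq.trans (hagree a hab))).symm
      · exact hb heq.symm
    have hfx := hf.lt_of_forall_ne (hnew hg.injective ih hne)
    have hgy := hg.lt_of_forall_ne
      (hnew hf.injective (fun a ha => (ih a ha).symm) (Ne.symm hne))
    exact (h hgy).not_gt hfx

end IsTopRanking

theorem isTopRanking_extend {ι R : Type*} [Zero R] [Preorder R] {k : ℕ} {σ : Fin k → ι}
    (hσ : Injective σ) {α : Fin k → R} (hα : StrictAnti α) (hpos : ∀ i, 0 < α i) :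
    IsTopRanking (extend σ α 0) σ :=
  ⟨by rwa [show extend σ α 0 ∘ σ = α from funext (hσ.extend_apply α 0)], fun j hj i => by
    rw [extend_apply' _ _ _ hj, hσ.extend_apply]
    exact hpos i⟩

namespace IsTopRanking

variable {ι R : Type*} [Fintype ι] [Semiring R] [LinearOrder R] [IsStrictOrderedRing R]
  [ExistsAddOfLE R] {k : ℕ} {f g : ι → R} {σ : Fin k → ι}

theorem sum_mul_comp_perm_lt_sum_mul (hf : IsTopRanking f σ)
    (hf' : ∀ i ∉ range σ, ∀ j ∉ range σ, f i = f j) (hg : IsTopRanking g σ)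
    {π : Equiv.Perm ι} (hπ : π ∘ σ ≠ σ) : ∑ i, f i * g (π i) < ∑ i, f i * g i := by
  refine (hf.monovary hf' hg).sum_mul_comp_perm_lt_sum_mul_iff.2 fun h => hπ ?_
  have hσ := hf.eq_of_monovary (hg.comp_perm π) h
  exact funext fun i => π.eq_symm_apply.1 (congrFun hσ i)

theorem sum_mul_comp_lt_sum_mul_comp (hg : IsTopRanking g σ) {α : Fin k → R}
    (hα : StrictAnti α) (hpos : ∀ i, 0 < α i) {τ : Fin k → ι} (hτ : Injective τ)
    (hτσ : τ ≠ σ) : ∑ i, α i * g (τ i) < ∑ i, α i * g (σ i) := by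
  obtain ⟨π, hπ⟩ := Equiv.Perm.exists_extending_pair σ τ hg.injective hτ
  have hsum (φ : ι → R) : ∑ i, α i * φ (σ i) = ∑ j, extend σ α 0 j * φ j :=
    Fintype.sum_of_injective σ hg.injective _ _
      (fun j hj => by rw [extend_apply' _ _ _ hj, Pi.zero_apply, zero_mul])
      (fun i => by rw [hg.injective.extend_apply])
  calc ∑ i, α i * g (τ i) = ∑ j, extend σ α 0 j * g (π j) := by
        simp_rw [← hπ]
        exact hsum (g ∘ π)
    _ < ∑ j, extend σ α 0 j * g j :=
        (isTopRanking_extend hg.injective hα hpos).sum_mul_comp_perm_lt_sum_mul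
          (fun i hi j hj => by rw [extend_apply' _ _ _ hi, extend_apply' _ _ _ hj]; rfl) hg
          (fun h => hτσ (funext fun i => (hπ i).symm.trans (congrFun h i)))
    _ = ∑ i, α i * g (σ i) := (hsum g).symm

end IsTopRanking

theorem ordertope_vertex_of_ordering_general
    (d n k : ℕ) (hk : 0 < k)
    (u : Fin n → EuclideanSpace ℝ (Fin d))
    (α : Fin k → ℝ) (hα : StrictAnti α) (hαpos : ∀ i, 0 < α i)
    (σ : Fin k → Fin n)
    (c : EuclideanSpace ℝ (Fin d))
    (hord : ∀ i j : Fin k, i < j → ⟪c, u (σ j)⟫ < ⟪c, u (σ i)⟫)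
    (hout : ∀ j : Fin n, j ∉ Set.range σ →
      ⟪c, u j⟫ < ⟪c, u (σ ⟨k - 1, Nat.sub_lt hk Nat.one_pos⟩)⟫) :
    (∑ i : Fin k, α i • u (σ i)) ∈
      Set.extremePoints ℝ (convexHull ℝ
        {x : EuclideanSpace ℝ (Fin d) |
          ∃ τ : Fin k → Fin n, Function.Injective τ ∧ x = ∑ i : Fin k, α i • u (τ i)}) := by
  have hanti : StrictAnti fun i => ⟪c, u (σ i)⟫ := fun i j hij => hord i j hij
  have hrank : IsTopRanking (fun j => ⟪c, u j⟫) σ :=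
    ⟨hanti, fun j hj i => (hout j hj).trans_le
      (hanti.antitone (Fin.mk_le_mk.2 (Nat.le_sub_one_of_lt i.2)))⟩
  have hinner (τ : Fin k → Fin n) :
      innerₛₗ ℝ c (∑ i, α i • u (τ i)) = ∑ i, α i * ⟪c, u (τ i)⟫ := by
    simp only [innerₛₗ_apply_apply, inner_sum, real_inner_smul_right]
  refine mem_extremePoints_convexHull_of_forall_lt (innerₛₗ ℝ c) ⟨σ, hrank.injective, rfl⟩ ?_
  rintro _ ⟨τ, hτ, rfl⟩ hne
  rw [hinner, hinner]
  exact hrank.sum_mul_comp_lt_sum_mul_comp hα hαpos hτ (by rintro rfl; exact hne rfl)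

/-- 'If' direction of Theorem 2.1: if the functional `c` satisfies the σ-ordering
condition, then `p_σ = ∑ i, α i • u (σ i)` is a vertex (extreme point) of the
`k`-ordertope `P_k`. -/
theorem ordertope_vertex_of_ordering
    (d n k : ℕ) (hd : 0 < d) (hn : 0 < n) (hk : 0 < k) (hkn : k ≤ n)
    (u : Fin n → EuclideanSpace ℝ (Fin d)) (hu : Function.Injective u)
    (α : Fin k → ℝ) (hα : StrictAnti α) (hαpos : ∀ i, 0 < α i)
    (σ : Fin k → Fin n) (hσ : Function.Injective σ)
    (c : EuclideanSpace ℝ (Fin d))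
    (hord : ∀ i j : Fin k, i < j → ⟪c, u (σ j)⟫ < ⟪c, u (σ i)⟫)
    (hout : ∀ j : Fin n, j ∉ Set.range σ →
      ⟪c, u j⟫ < ⟪c, u (σ ⟨k - 1, Nat.sub_lt hk Nat.one_pos⟩)⟫) :
    (∑ i : Fin k, α i • u (σ i)) ∈
      Set.extremePoints ℝ (convexHull ℝ
        {x : EuclideanSpace ℝ (Fin d) |
          ∃ τ : Fin k → Fin n, Function.Injective τ ∧ x = ∑ i : Fin k, α i • u (τ i)}) :=
  ordertope_vertex_of_ordering_general d n k hk u α hα hαpos σ c hord hout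
end

section
/- Suppose the point p_σ = Σ_{i=1}^k α_i u(σ i) is an extreme point (vertex) of the k-ordertope P_k. Then there exists a linear functional c satisfying the σ-ordering condition, i.e. ⟨c,u(σ 1)⟩ > ⟨c,u(σ 2)⟩ > ... > ⟨c,u(σ k)⟩ and ⟨c,u(σ k)⟩ > ⟨c,u j⟩ for every index j not in the range of σ. (This is the 'only if' direction of Theorem 2.1.) -/
open scoped RealInnerProductSpace

/-!
An extreme point `p_σ` of the polytope `P_k` is separated from the convex hull of the other
generators `p_τ` by a functional `c`, so `⟪c, p_τ⟫ < ⟪c, p_σ⟫` whenever `p_τ ≠ p_σ`. Swapping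
`σ i` and `σ j` (for `i < j`) moves `p_σ` by `(α i - α j) • (u (σ j) - u (σ i))`, and replacing
`σ k` by an unused index `j` moves it by `α k • (u j - u (σ k))`; since these moves are nonzero and
must decrease `⟪c, ·⟫`, they give the two ordering conditions.
-/

theorem Function.Injective.update_of_notMem_range {α β : Type*} [DecidableEq α] {f : α → β}
    (hf : Function.Injective f) (a : α) {b : β} (hb : b ∉ Set.range f) :
    Function.Injective (Function.update f a b) := by
  intro x y hxy
  by_cases hx : x = a <;> by_cases hy : y = a
  · exact hx.trans hy.symm
  · subst hx
    rw [Function.update_self, Function.update_of_ne hy] at hxy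
    exact absurd ⟨y, hxy.symm⟩ hb
  · subst hy
    rw [Function.update_self, Function.update_of_ne hx] at hxy
    exact absurd ⟨x, hxy⟩ hb
  · rw [Function.update_of_ne hx, Function.update_of_ne hy] at hxy
    exact hf hxy

section WeightedSum

variable {ι κ R M : Type*} [Fintype ι] [DecidableEq ι] [Ring R] [AddCommGroup M] [Module R M]

theorem sum_smul_comp_swap_sub_sum_smul (α : ι → R) (v : ι → M) {i j : ι} (hij : i ≠ j) :
    ∑ a, α a • v (Equiv.swap i j a) - ∑ a, α a • v a = (α i - α j) • (v j - v i) := by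
  rw [← Finset.sum_sub_distrib, Fintype.sum_eq_add i j hij fun a ha => by
    rw [Equiv.swap_apply_of_ne_of_ne ha.1 ha.2, sub_self]]
  rw [Equiv.swap_apply_left, Equiv.swap_apply_right, sub_smul, smul_sub, smul_sub]
  abel

theorem sum_smul_comp_update_sub_sum_smul (α : ι → R) (u : κ → M) (σ : ι → κ) (l : ι) (j : κ) :
    ∑ a, α a • u (Function.update σ l j a) - ∑ a, α a • u (σ a) = α l • (u j - u (σ l)) := by
  rw [← Finset.sum_sub_distrib, Fintype.sum_eq_single l fun a ha => by
    rw [Function.update_of_ne ha, sub_self]]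
  rw [Function.update_self, smul_sub]

end WeightedSum

theorem Set.Finite.exists_forall_lt_of_mem_extremePoints_convexHull {E : Type*}
    [TopologicalSpace E] [AddCommGroup E] [Module ℝ E] [IsTopologicalAddGroup E]
    [ContinuousSMul ℝ E] [LocallyConvexSpace ℝ E] [T2Space E] {S : Set E} (hS : S.Finite) {x : E}
    (hx : x ∈ (convexHull ℝ S).extremePoints ℝ) :
    ∃ f : StrongDual ℝ E, ∀ y ∈ S, y ≠ x → f y < f x := by
  have hx' : x ∉ convexHull ℝ (S \ {x}) := fun hmem =>
    ((convex_convexHull ℝ S).mem_extremePoints_iff_mem_sdiff_convexHull_sdiff.1 hx).2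
      (convexHull_mono (Set.sdiff_subset_sdiff_left (subset_convexHull ℝ S)) hmem)
  obtain ⟨f, t, hft, htx⟩ := geometric_hahn_banach_closed_point (convex_convexHull ℝ _)
    ((hS.sdiff (t := {x})).isClosed_convexHull (𝕜 := ℝ)) hx'
  exact ⟨f, fun y hy hyx => (hft y (subset_convexHull ℝ _ ⟨hy, hyx⟩)).trans htx⟩

theorem Set.Finite.exists_inner_lt_of_mem_extremePoints_convexHull {E : Type*}
    [NormedAddCommGroup E] [InnerProductSpace ℝ E] [CompleteSpace E] {S : Set E} (hS : S.Finite)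
    {x : E} (hx : x ∈ (convexHull ℝ S).extremePoints ℝ) :
    ∃ c : E, ∀ y ∈ S, y ≠ x → ⟪c, y⟫ < ⟪c, x⟫ := by
  obtain ⟨f, hf⟩ := hS.exists_forall_lt_of_mem_extremePoints_convexHull hx
  refine ⟨(InnerProductSpace.toDual ℝ E).symm f, fun y hy hyx => ?_⟩
  simpa only [InnerProductSpace.toDual_symm_apply] using hf y hy hyx

theorem inner_lt_inner_of_sub_eq_smul_sub {E : Type*} [NormedAddCommGroup E]
    [InnerProductSpace ℝ E] {c p q a b : E} {t : ℝ} (hq : q ≠ p → ⟪c, q⟫ < ⟪c, p⟫)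
    (hqp : q - p = t • (a - b)) (ht : 0 < t) (hab : a ≠ b) : ⟪c, a⟫ < ⟪c, b⟫ := by
  have hne : q ≠ p := by
    rw [← sub_ne_zero, hqp]
    exact smul_ne_zero ht.ne' (sub_ne_zero.2 hab)
  have hinner : ⟪c, q⟫ - ⟪c, p⟫ = t * (⟪c, a⟫ - ⟪c, b⟫) := by
    rw [← inner_sub_right, hqp, inner_smul_right, inner_sub_right]
  nlinarith [hq hne]

theorem ordering_of_ordertope_vertex_general
    (d n k : ℕ) (hk : 0 < k)
    (u : Fin n → EuclideanSpace ℝ (Fin d)) (hu : Function.Injective u)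
    (α : Fin k → ℝ) (hα : StrictAnti α) (hαpos : ∀ i, 0 < α i)
    (σ : Fin k → Fin n) (hσ : Function.Injective σ)
    (hvert : (∑ i : Fin k, α i • u (σ i)) ∈
      Set.extremePoints ℝ (convexHull ℝ
        {x : EuclideanSpace ℝ (Fin d) |
          ∃ τ : Fin k → Fin n, Function.Injective τ ∧ x = ∑ i : Fin k, α i • u (τ i)})) :
    ∃ c : EuclideanSpace ℝ (Fin d),
      (∀ i j : Fin k, i < j → ⟪c, u (σ j)⟫ < ⟪c, u (σ i)⟫) ∧
      (∀ j : Fin n, j ∉ Set.range σ →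
        ⟪c, u j⟫ < ⟪c, u (σ ⟨k - 1, Nat.sub_lt hk Nat.one_pos⟩)⟫) := by
  have hfinite : {x : EuclideanSpace ℝ (Fin d) |
      ∃ τ : Fin k → Fin n, Function.Injective τ ∧ x = ∑ i : Fin k, α i • u (τ i)}.Finite :=
    (Set.finite_range fun τ : Fin k → Fin n => ∑ i, α i • u (τ i)).subset
      fun _ ⟨τ, _, hx⟩ => ⟨τ, hx.symm⟩
  obtain ⟨c, hc⟩ := hfinite.exists_inner_lt_of_mem_extremePoints_convexHull hvert
  have hopt : ∀ τ : Fin k → Fin n, Function.Injective τ →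
      (∑ i, α i • u (τ i)) ≠ ∑ i, α i • u (σ i) →
        ⟪c, ∑ i, α i • u (τ i)⟫ < ⟪c, ∑ i, α i • u (σ i)⟫ :=
    fun τ hτ => hc _ ⟨τ, hτ, rfl⟩
  refine ⟨c, fun i j hij => ?_, fun j hj => ?_⟩
  · exact inner_lt_inner_of_sub_eq_smul_sub (hopt _ (hσ.comp (Equiv.swap i j).injective))
      (sum_smul_comp_swap_sub_sum_smul α (u ∘ σ) hij.ne) (sub_pos.2 (hα hij))
      (hu.ne (hσ.ne hij.ne'))
  · exact inner_lt_inner_of_sub_eq_smul_sub (hopt _ (hσ.update_of_notMem_range _ hj))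
      (sum_smul_comp_update_sub_sum_smul α u σ _ j) (hαpos _)
      (hu.ne fun hjl => hj ⟨_, hjl.symm⟩)

/-- 'Only if' direction of Theorem 2.1: if `p_σ = ∑ i, α i • u (σ i)` is a vertex
(extreme point) of the `k`-ordertope `P_k`, then there is a functional `c`
satisfying the σ-ordering condition. -/
theorem ordering_of_ordertope_vertex
    (d n k : ℕ) (hd : 0 < d) (hn : 0 < n) (hk : 0 < k) (hkn : k ≤ n)
    (u : Fin n → EuclideanSpace ℝ (Fin d)) (hu : Function.Injective u)
    (α : Fin k → ℝ) (hα : StrictAnti α) (hαpos : ∀ i, 0 < α i)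
    (σ : Fin k → Fin n) (hσ : Function.Injective σ)
    (hvert : (∑ i : Fin k, α i • u (σ i)) ∈
      Set.extremePoints ℝ (convexHull ℝ
        {x : EuclideanSpace ℝ (Fin d) |
          ∃ τ : Fin k → Fin n, Function.Injective τ ∧ x = ∑ i : Fin k, α i • u (τ i)})) :
    ∃ c : EuclideanSpace ℝ (Fin d),
      (∀ i j : Fin k, i < j → ⟪c, u (σ j)⟫ < ⟪c, u (σ i)⟫) ∧
      (∀ j : Fin n, j ∉ Set.range σ →
        ⟪c, u j⟫ < ⟪c, u (σ ⟨k - 1, Nat.sub_lt hk Nat.one_pos⟩)⟫) :=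
  ordering_of_ordertope_vertex_general d n k hk u hu α hα hαpos σ hσ hvert
end

section
/- Suppose the linear functional c satisfies the σ-ordering condition, i.e. ⟨c,u(σ 1)⟩ > ⟨c,u(σ 2)⟩ > ... > ⟨c,u(σ k)⟩ and ⟨c,u(σ k)⟩ > ⟨c,u j⟩ for every index j not in the range of σ. Then for every injective map γ : Fin k → Fin n with γ ≠ σ one has the strict inequality ⟨c, p_σ⟩ > ⟨c, p_γ⟩; in particular p_σ is the unique maximizer of c over the k-ordertope P_k. -/
/-!
Extend the weights `α` by zero along `σ` to weights `w` on all `n` score vectors, so that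
`⟪c, p_σ⟫ = ∑ j, w j * ⟪c, u j⟫`. The ordering condition makes `w` and the scores monovary, and
`⟪c, p_γ⟫` is the same sum with the scores permuted by a permutation `π` extending `γ ∘ σ⁻¹`, so
the rearrangement inequality gives `⟪c, p_γ⟫ ≤ ⟪c, p_σ⟫`. It is strict because `π` creates an
inversion at the first index where `γ` and `σ` differ. Finally, the points where `c` is below
`⟪c, p_σ⟫`, together with `p_σ`, form a convex set containing every vertex of `P_k`, hence all of
`P_k`.
-/

open scoped RealInnerProductSpace

open Function Set Equiv

variable {ι κ : Type*}

section Ranking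

variable [LinearOrder κ] {β : Type*} [LinearOrder β] {σ γ : κ → ι} {f : ι → β} {α : κ → ℝ}

structure IsRanking (σ : κ → ι) (f : ι → β) : Prop where
  strictAnti : StrictAnti (f ∘ σ)
  lt_of_notMem_range : ∀ x ∉ range σ, ∀ i, f x < f (σ i)

theorem IsRanking.of_lt_apply_top (hσ : StrictAnti (f ∘ σ)) {m : κ} (hm : ∀ i, i ≤ m)
    (hout : ∀ x ∉ range σ, f x < f (σ m)) : IsRanking σ f :=
  ⟨hσ, fun x hx i => (hout x hx).trans_le (hσ.antitone (hm i))⟩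

theorem IsRanking.lt_of_forall_le_ne (hf : IsRanking σ f) {i : κ} {x : ι}
    (hx : ∀ a ≤ i, σ a ≠ x) : f x < f (σ i) := by
  by_cases hxσ : x ∈ range σ
  · obtain ⟨b, rfl⟩ := hxσ
    exact hf.strictAnti (lt_of_not_ge fun hb => hx b hb rfl)
  · exact hf.lt_of_notMem_range x hxσ i

theorem isRanking_extend_zero (hσ : Injective σ) (hα : StrictAnti α) (hα0 : ∀ i, 0 < α i) :
    IsRanking σ (extend σ α 0) := by
  refine ⟨fun a b hab => ?_, fun x hx i => ?_⟩
  · simp only [comp_apply, hσ.extend_apply]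
    exact hα hab
  · rw [extend_apply' _ _ _ hx, hσ.extend_apply]
    exact hα0 i

theorem IsRanking.monovary_extend_zero (hf : IsRanking σ f) (hσ : Injective σ)
    (hα : Antitone α) (hα0 : ∀ i, 0 ≤ α i) : Monovary (extend σ α 0) f := by
  intro x y hxy
  by_cases hy : y ∈ range σ
  · obtain ⟨b, rfl⟩ := hy
    rw [hσ.extend_apply]
    by_cases hx : x ∈ range σ
    · obtain ⟨a, rfl⟩ := hx
      rw [hσ.extend_apply]
      exact hα (hf.strictAnti.lt_iff_gt.mp hxy).le
    · rw [extend_apply' _ _ _ hx]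
      exact hα0 b
  · have hx : x ∉ range σ := by
      rintro ⟨a, rfl⟩
      exact (hf.lt_of_notMem_range y hy a).not_gt hxy
    rw [extend_apply' _ _ _ hx, extend_apply' _ _ _ hy]
    exact le_rfl

/-- The inversion is the pair `σ i`, `π⁻¹ (σ i)` for the first index `i` with `γ i ≠ σ i`: the
first has the larger weight but, after permuting, the smaller score. -/
theorem IsRanking.not_monovary_extend_zero_comp_perm [WellFoundedLT κ] (hf : IsRanking σ f)
    (hσ : Injective σ) (hγ : Injective γ) (hγσ : γ ≠ σ) (hα : StrictAnti α)
    (hα0 : ∀ i, 0 < α i) {π : Perm ι} (hπ : ∀ i, π (σ i) = γ i) :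
    ¬Monovary (extend σ α 0) (f ∘ π) := by
  obtain ⟨i, hi, hmin⟩ := wellFounded_lt.has_min {i | γ i ≠ σ i} (ne_iff.1 hγσ)
  have hagree : ∀ a < i, γ a = σ a := fun a ha => not_not.1 fun h => hmin a h ha
  intro hmono
  refine (hmono (i := σ i) (j := π.symm (σ i)) ?_).not_gt ?_
  · simp only [comp_apply, hπ, Equiv.apply_symm_apply]
    refine hf.lt_of_forall_le_ne fun a ha h => ?_
    rcases ha.lt_or_eq with ha | rfl
    · exact ha.ne (hγ (by rw [hagree a ha, h]))
    · exact hi h.symm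
  · have hw := isRanking_extend_zero hσ hα hα0
    refine hw.lt_of_forall_le_ne fun a ha h => ?_
    have hγa : γ a = σ i := by rw [← hπ, h, Equiv.apply_symm_apply]
    rcases ha.lt_or_eq with ha | rfl
    · exact ha.ne (hσ (by rw [← hagree a ha, hγa]))
    · exact hi hγa

end Ranking

theorem sum_extend_zero_smul {R M : Type*} [Semiring R] [AddCommMonoid M] [Module R M]
    [Fintype ι] [Fintype κ] {σ : κ → ι} (hσ : Injective σ) (α : κ → R) (g : ι → M) :
    ∑ x, extend σ α 0 x • g x = ∑ i, α i • g (σ i) :=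
  (Fintype.sum_of_injective σ hσ _ _ (fun x hx => by simp [extend_apply' _ _ _ hx])
    (fun i => by simp [hσ.extend_apply])).symm

theorem IsRanking.sum_smul_comp_lt [Fintype ι] [Fintype κ] [LinearOrder κ] {σ γ : κ → ι}
    {f : ι → ℝ} (hf : IsRanking σ f) (hσ : Injective σ) (hγ : Injective γ) (hγσ : γ ≠ σ)
    {α : κ → ℝ} (hα : StrictAnti α) (hα0 : ∀ i, 0 < α i) :
    ∑ i, α i • f (γ i) < ∑ i, α i • f (σ i) := by
  obtain ⟨π, hπ⟩ := Perm.exists_extending_pair σ γ hσ hγ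
  have hmono := hf.monovary_extend_zero hσ hα.antitone fun i => (hα0 i).le
  calc ∑ i, α i • f (γ i) = ∑ x, extend σ α 0 x • f (π x) := by
        simp only [sum_extend_zero_smul hσ, hπ]
    _ < ∑ x, extend σ α 0 x • f x := hmono.sum_smul_comp_perm_lt_sum_smul_iff.2
        (hf.not_monovary_extend_zero_comp_perm hσ hγ hγσ hα hα0 hπ)
    _ = ∑ i, α i • f (σ i) := sum_extend_zero_smul hσ α f

section Convex

variable {𝕜 E : Type*} [Ring 𝕜] [LinearOrder 𝕜] [IsStrictOrderedRing 𝕜] [AddCommGroup E]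
  [Module 𝕜 E]

theorem convex_setOf_lt_or_eq (l : E →ₗ[𝕜] 𝕜) (p : E) : Convex 𝕜 {y | l y < l p ∨ y = p} := by
  refine convex_iff_forall_pos.2 fun y hy z hz a b ha hb hab => ?_
  by_cases hp : y = p ∧ z = p
  · right
    rw [hp.1, hp.2, Convex.combo_self hab]
  left
  have hy' : l y ≤ l p := hy.elim le_of_lt fun h => h ▸ le_rfl
  have hz' : l z ≤ l p := hz.elim le_of_lt fun h => h ▸ le_rfl
  have key : a * l y + b * l z < a * l p + b * l p := by
    rcases not_and_or.1 hp with hyp | hzp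
    · exact add_lt_add_of_lt_of_le (mul_lt_mul_of_pos_left (hy.resolve_right hyp) ha)
        (mul_le_mul_of_nonneg_left hz' hb.le)
    · exact add_lt_add_of_le_of_lt (mul_le_mul_of_nonneg_left hy' ha.le)
        (mul_lt_mul_of_pos_left (hz.resolve_right hzp) hb)
  simpa only [map_add, map_smul, smul_eq_mul, ← add_mul, hab, one_mul] using key

theorem lt_of_mem_convexHull_of_ne (l : E →ₗ[𝕜] 𝕜) {s : Set E} {p x : E}
    (hs : ∀ y ∈ s, y ≠ p → l y < l p) (hx : x ∈ convexHull 𝕜 s) (hxp : x ≠ p) : l x < l p :=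
  (convexHull_min (fun y hy => (em (y = p)).symm.imp (hs y hy) id)
    (convex_setOf_lt_or_eq l p) hx).resolve_right hxp

end Convex

theorem ordering_implies_unique_maximizer_general
    (d n k : ℕ) (hk : 0 < k)
    (u : Fin n → EuclideanSpace ℝ (Fin d))
    (α : Fin k → ℝ) (hα : StrictAnti α) (hαpos : ∀ i, 0 < α i)
    (σ : Fin k → Fin n) (hσ : Function.Injective σ)
    (c : EuclideanSpace ℝ (Fin d))
    (hord : ∀ i j : Fin k, i < j → ⟪c, u (σ j)⟫ < ⟪c, u (σ i)⟫)
    (hout : ∀ j : Fin n, j ∉ Set.range σ →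
      ⟪c, u j⟫ < ⟪c, u (σ ⟨k - 1, Nat.sub_lt hk Nat.one_pos⟩)⟫) :
    (∀ γ : Fin k → Fin n, Function.Injective γ → γ ≠ σ →
      ⟪c, (∑ i : Fin k, α i • u (γ i))⟫ < ⟪c, (∑ i : Fin k, α i • u (σ i))⟫) ∧
    (∀ x ∈ convexHull ℝ
        {x : EuclideanSpace ℝ (Fin d) |
          ∃ τ : Fin k → Fin n, Function.Injective τ ∧ x = ∑ i : Fin k, α i • u (τ i)},
      x ≠ (∑ i : Fin k, α i • u (σ i)) →
        ⟪c, x⟫ < ⟪c, (∑ i : Fin k, α i • u (σ i))⟫) := by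
  have hrank : IsRanking σ fun j => ⟪c, u j⟫ :=
    .of_lt_apply_top hord (fun i => Fin.le_def.2 (Nat.le_sub_one_of_lt i.2)) hout
  have hinner (τ : Fin k → Fin n) : ⟪c, ∑ i, α i • u (τ i)⟫ = ∑ i, α i • ⟪c, u (τ i)⟫ := by
    simp only [inner_sum, real_inner_smul_right, smul_eq_mul]
  have hvert (γ : Fin k → Fin n) (hγ : Injective γ) (hγσ : γ ≠ σ) :
      ⟪c, ∑ i, α i • u (γ i)⟫ < ⟪c, ∑ i, α i • u (σ i)⟫ := by
    rw [hinner, hinner]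
    exact hrank.sum_smul_comp_lt hσ hγ hγσ hα hαpos
  refine ⟨hvert, fun x hx hxp => lt_of_mem_convexHull_of_ne (innerₗ _ c) ?_ hx hxp⟩
  rintro _ ⟨τ, hτ, rfl⟩ hne
  exact hvert τ hτ fun h => hne (h ▸ rfl)

/-- If the functional `c` satisfies the σ-ordering condition, then
`⟪c, p_σ⟫ > ⟪c, p_γ⟫` for every injective `γ ≠ σ`; in particular `p_σ` is the
unique maximizer of `c` over the `k`-ordertope `P_k`. -/
theorem ordering_implies_unique_maximizer
    (d n k : ℕ) (hd : 0 < d) (hn : 0 < n) (hk : 0 < k) (hkn : k ≤ n)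
    (u : Fin n → EuclideanSpace ℝ (Fin d)) (hu : Function.Injective u)
    (α : Fin k → ℝ) (hα : StrictAnti α) (hαpos : ∀ i, 0 < α i)
    (σ : Fin k → Fin n) (hσ : Function.Injective σ)
    (c : EuclideanSpace ℝ (Fin d))
    (hord : ∀ i j : Fin k, i < j → ⟪c, u (σ j)⟫ < ⟪c, u (σ i)⟫)
    (hout : ∀ j : Fin n, j ∉ Set.range σ →
      ⟪c, u j⟫ < ⟪c, u (σ ⟨k - 1, Nat.sub_lt hk Nat.one_pos⟩)⟫) :
    (∀ γ : Fin k → Fin n, Function.Injective γ → γ ≠ σ →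
      ⟪c, (∑ i : Fin k, α i • u (γ i))⟫ < ⟪c, (∑ i : Fin k, α i • u (σ i))⟫) ∧
    (∀ x ∈ convexHull ℝ
        {x : EuclideanSpace ℝ (Fin d) |
          ∃ τ : Fin k → Fin n, Function.Injective τ ∧ x = ∑ i : Fin k, α i • u (τ i)},
      x ≠ (∑ i : Fin k, α i • u (σ i)) →
        ⟪c, x⟫ < ⟪c, (∑ i : Fin k, α i • u (σ i))⟫) :=
  ordering_implies_unique_maximizer_general d n k hk u α hα hαpos σ hσ c hord hout
end

section
/- For a linear functional c and an injective map σ : Fin k → Fin n, the following are equivalent: (1) ⟨c, p_σ⟩ > ⟨c, p_γ⟩ for every injective γ : Fin k → Fin n with γ ≠ σ (i.e. c lies in the relative interior of the normal cone of the vertex p_σ of P_k); (2) c satisfies the σ-ordering condition, i.e. ⟨c,u(σ 1)⟩ > ⟨c,u(σ 2)⟩ > ... > ⟨c,u(σ k)⟩ and ⟨c,u(σ k)⟩ > ⟨c,u j⟩ for every index j not in the range of σ. -/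
/-!
Put weight `α i` on the point `σ i` and weight `0` off the range of `σ`, giving
`w := extend σ α 0`. Every injection `γ` is `π ∘ σ` for a permutation `π`, so comparing `⟪c, p_γ⟫`
with `⟪c, p_σ⟫` is an instance of the rearrangement inequality for these weights and the values
`⟪c, u j⟫`. Under the ordering condition weights and values monovary, while at the first index
where `γ` leaves `σ` the weights and the permuted values do not, which makes the inequality
strict. Conversely, composing `σ` with the transposition of `σ m` and a point `t ∉ σ '' Iic m`
lowers `⟪c, p_σ⟫` by `(α m - w t) * (⟪c, u (σ m)⟫ - ⟪c, u t⟫)` with `w t < α m`, which forces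
`⟪c, u t⟫ < ⟪c, u (σ m)⟫`.
-/

open scoped RealInnerProductSpace
open Function Set

section TopEnumeration

variable {ι : Type*} {k : ℕ} {σ : Fin k → ι} {g : ι → ℝ} {α : Fin k → ℝ}

/-- `σ` lists `k` largest values of `g`, in strictly decreasing order. -/
def IsTopEnumeration (σ : Fin k → ι) (g : ι → ℝ) : Prop :=
  ∀ m t, t ∉ σ '' Iic m → g t < g (σ m)

theorem IsTopEnumeration.strictAnti (hσ : Injective σ) (hg : IsTopEnumeration σ g) :
    StrictAnti (g ∘ σ) := by
  intro i j hij
  refine hg i (σ j) ?_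
  rintro ⟨i', hi', he⟩
  exact (hσ he ▸ hi').not_gt hij

theorem isTopEnumeration_iff (hσ : Injective σ) {l : Fin k} (hl : ∀ i, i ≤ l) :
    IsTopEnumeration σ g ↔ StrictAnti (g ∘ σ) ∧ ∀ j ∉ range σ, g j < g (σ l) := by
  refine ⟨fun hg => ⟨hg.strictAnti hσ, fun j hj => hg l j fun h => hj (image_subset_range _ _ h)⟩,
    fun ⟨hanti, hout⟩ m t ht => ?_⟩
  by_cases htσ : t ∈ range σ
  · obtain ⟨j, rfl⟩ := htσ
    exact hanti (not_le.mp fun hj => ht ⟨j, hj, rfl⟩)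
  · exact (hout t htσ).trans_le (hanti.antitone (hl m))

theorem isTopEnumeration_extend (hσ : Injective σ) (hα : StrictAnti α) (hαpos : ∀ i, 0 < α i) :
    IsTopEnumeration σ (extend σ α 0) := by
  intro m t ht
  rw [hσ.extend_apply]
  by_cases htσ : t ∈ range σ
  · obtain ⟨j, rfl⟩ := htσ
    rw [hσ.extend_apply]
    exact hα (not_le.mp fun hj => ht ⟨j, hj, rfl⟩)
  · rw [extend_apply' _ _ _ htσ]
    exact hαpos m

theorem extend_zero_nonneg (hα : ∀ i, 0 ≤ α i) (j : ι) : 0 ≤ extend σ α 0 j := by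
  classical
  rw [extend_def]
  split_ifs
  exacts [hα _, le_rfl]

theorem monovary_extend (hσ : Injective σ) (hα : Antitone α) (hαnn : ∀ i, 0 ≤ α i)
    (hg : IsTopEnumeration σ g) : Monovary (extend σ α 0) g := by
  intro i j hij
  by_cases hi : ∃ m, σ m = i
  · obtain ⟨m, rfl⟩ := hi
    obtain ⟨i', hi', rfl⟩ : j ∈ σ '' Iic m := by
      by_contra hj
      exact (hg m j hj).not_gt hij
    rw [hσ.extend_apply, hσ.extend_apply]
    exact hα hi'
  · rw [extend_apply' _ _ _ hi]
    exact extend_zero_nonneg hαnn j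

theorem not_monovary_extend_comp_perm (hσ : Injective σ) (hα : StrictAnti α)
    (hαpos : ∀ i, 0 < α i) (hg : IsTopEnumeration σ g) {π : Equiv.Perm ι} (hπ : π ∘ σ ≠ σ) :
    ¬Monovary (extend σ α 0) (g ∘ π) := by
  obtain ⟨m, hm, hmin⟩ :=
    WellFounded.has_min wellFounded_lt {m | π (σ m) ≠ σ m} (Function.ne_iff.mp hπ)
  have hfix : ∀ i < m, π (σ i) = σ i := fun i hi => by_contra fun h => hmin i h hi
  have hmoved : π (σ m) ∉ σ '' Iic m := by
    rintro ⟨i, hi, he⟩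
    rcases (mem_Iic.mp hi).lt_or_eq with hi | rfl
    · rw [← hfix i hi] at he
      exact hi.ne (hσ (π.injective he))
    · exact hm he.symm
  have hpreimage : π.symm (σ m) ∉ σ '' Iic m := by
    rintro ⟨i, hi, he⟩
    rw [Equiv.eq_symm_apply] at he
    rcases (mem_Iic.mp hi).lt_or_eq with hi | rfl
    · rw [hfix i hi] at he
      exact hi.ne (hσ he)
    · exact hm he
  intro hmono
  have hle := @hmono (σ m) (π.symm (σ m)) (by simpa using hg m _ hmoved)
  exact (isTopEnumeration_extend hσ hα hαpos m _ hpreimage).not_ge hle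

theorem sum_extend_zero_mul [Fintype ι] (hσ : Injective σ) (α : Fin k → ℝ) (h : ι → ℝ) :
    ∑ j, extend σ α 0 j * h j = ∑ i, α i * h (σ i) :=
  (Fintype.sum_of_injective σ hσ _ _
    (fun j hj => by rw [extend_apply' _ _ _ hj, Pi.zero_apply, zero_mul])
    (fun i => by rw [hσ.extend_apply])).symm

theorem sum_mul_comp_swap [Fintype ι] [DecidableEq ι] (w g : ι → ℝ) (a b : ι) :
    ∑ j, w j * g (Equiv.swap a b j) = ∑ j, w j * g j - (w a - w b) * (g a - g b) := by
  rcases eq_or_ne a b with rfl | hab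
  · simp
  have hdiff : ∑ j, (w j * g (Equiv.swap a b j) - w j * g j) = -((w a - w b) * (g a - g b)) := by
    rw [Fintype.sum_eq_add a b hab fun j hj => by
      rw [Equiv.swap_apply_of_ne_of_ne hj.1 hj.2, sub_self]]
    rw [Equiv.swap_apply_left, Equiv.swap_apply_right]
    ring
  rw [Finset.sum_sub_distrib] at hdiff
  linarith

variable [Fintype ι]

theorem sum_mul_comp_lt_of_isTopEnumeration (hσ : Injective σ) (hα : StrictAnti α)
    (hαpos : ∀ i, 0 < α i) (hg : IsTopEnumeration σ g) {γ : Fin k → ι} (hγ : Injective γ)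
    (hne : γ ≠ σ) : ∑ i, α i * g (γ i) < ∑ i, α i * g (σ i) := by
  obtain ⟨π, hπ⟩ := Equiv.Perm.exists_extending_pair σ γ hσ hγ
  obtain rfl : γ = π ∘ σ := funext fun i => (hπ i).symm
  have hmono := monovary_extend hσ hα.antitone (fun i => (hαpos i).le) hg
  have hrearr := hmono.sum_mul_comp_perm_lt_sum_mul_iff.mpr
    (not_monovary_extend_comp_perm hσ hα hαpos hg hne)
  simpa only [sum_extend_zero_mul hσ α, comp_apply] using hrearr

theorem isTopEnumeration_of_forall_sum_mul_comp_lt [DecidableEq ι] (hσ : Injective σ)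
    (hα : StrictAnti α) (hαpos : ∀ i, 0 < α i)
    (H : ∀ γ : Fin k → ι, Injective γ → γ ≠ σ → ∑ i, α i * g (γ i) < ∑ i, α i * g (σ i)) :
    IsTopEnumeration σ g := by
  intro m t ht
  have hswap : Equiv.swap (σ m) t ∘ σ ≠ σ := fun h =>
    ht ⟨m, mem_Iic.mpr le_rfl, by simpa using (congrFun h m).symm⟩
  have hgain : ∑ j, extend σ α 0 j * g (Equiv.swap (σ m) t j) < ∑ j, extend σ α 0 j * g j := by
    simpa only [sum_extend_zero_mul hσ α, comp_apply] using
      H _ ((Equiv.injective _).comp hσ) hswap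
  rw [sum_mul_comp_swap, sub_lt_self_iff] at hgain
  have hw := isTopEnumeration_extend hσ hα hαpos m t ht
  exact sub_pos.mp ((pos_iff_pos_of_mul_pos hgain).mp (sub_pos.mpr hw))

theorem forall_sum_mul_comp_lt_iff_isTopEnumeration [DecidableEq ι] (hσ : Injective σ)
    (hα : StrictAnti α) (hαpos : ∀ i, 0 < α i) :
    (∀ γ : Fin k → ι, Injective γ → γ ≠ σ → ∑ i, α i * g (γ i) < ∑ i, α i * g (σ i)) ↔
      IsTopEnumeration σ g :=
  ⟨isTopEnumeration_of_forall_sum_mul_comp_lt hσ hα hαpos,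
    fun hg _ hγ hne => sum_mul_comp_lt_of_isTopEnumeration hσ hα hαpos hg hγ hne⟩

end TopEnumeration

theorem normal_cone_interior_iff_ordering_general
    (d n k : ℕ) (hk : 0 < k)
    (u : Fin n → EuclideanSpace ℝ (Fin d))
    (α : Fin k → ℝ) (hα : StrictAnti α) (hαpos : ∀ i, 0 < α i)
    (σ : Fin k → Fin n) (hσ : Function.Injective σ)
    (c : EuclideanSpace ℝ (Fin d)) :
    (∀ γ : Fin k → Fin n, Function.Injective γ → γ ≠ σ →
      ⟪c, (∑ i : Fin k, α i • u (γ i))⟫ < ⟪c, (∑ i : Fin k, α i • u (σ i))⟫) ↔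
    ((∀ i j : Fin k, i < j → ⟪c, u (σ j)⟫ < ⟪c, u (σ i)⟫) ∧
      (∀ j : Fin n, j ∉ Set.range σ →
        ⟪c, u j⟫ < ⟪c, u (σ ⟨k - 1, Nat.sub_lt hk Nat.one_pos⟩)⟫)) := by
  simp only [inner_sum, real_inner_smul_right]
  rw [forall_sum_mul_comp_lt_iff_isTopEnumeration (g := fun j => ⟪c, u j⟫) hσ hα hαpos,
    isTopEnumeration_iff (l := ⟨k - 1, Nat.sub_lt hk Nat.one_pos⟩) hσ
      fun i => Fin.le_def.mpr (Nat.le_sub_one_of_lt i.isLt)]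
  rfl

/-- The functional `c` lies in the relative interior of the normal cone of the
vertex `p_σ` of the `k`-ordertope (i.e. `⟪c, p_σ⟫ > ⟪c, p_γ⟫` for all injective
`γ ≠ σ`) if and only if `c` satisfies the σ-ordering condition. -/
theorem normal_cone_interior_iff_ordering
    (d n k : ℕ) (hd : 0 < d) (hn : 0 < n) (hk : 0 < k) (hkn : k ≤ n)
    (u : Fin n → EuclideanSpace ℝ (Fin d)) (hu : Function.Injective u)
    (α : Fin k → ℝ) (hα : StrictAnti α) (hαpos : ∀ i, 0 < α i)
    (σ : Fin k → Fin n) (hσ : Function.Injective σ)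
    (c : EuclideanSpace ℝ (Fin d)) :
    (∀ γ : Fin k → Fin n, Function.Injective γ → γ ≠ σ →
      ⟪c, (∑ i : Fin k, α i • u (γ i))⟫ < ⟪c, (∑ i : Fin k, α i • u (σ i))⟫) ↔
    ((∀ i j : Fin k, i < j → ⟪c, u (σ j)⟫ < ⟪c, u (σ i)⟫) ∧
      (∀ j : Fin n, j ∉ Set.range σ →
        ⟪c, u j⟫ < ⟪c, u (σ ⟨k - 1, Nat.sub_lt hk Nat.one_pos⟩)⟫)) :=
  normal_cone_interior_iff_ordering_general d n k hk u α hα hαpos σ hσ c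
end

section
/- The normal fan of the k-ordertope is independent of the choice of the decreasing positive weights: if α, β : Fin k → ℝ are two strictly decreasing families of positive weights, writing p_σ^α = Σ_{i=1}^k α_i u(σ i) and p_σ^β = Σ_{i=1}^k β_i u(σ i), then for every functional c and every injective σ : Fin k → Fin n, one has ⟨c, p_σ^α⟩ > ⟨c, p_γ^α⟩ for all injective γ ≠ σ if and only if ⟨c, p_σ^β⟩ > ⟨c, p_γ^β⟩ for all injective γ ≠ σ. -/
open scoped RealInnerProductSpace

/-!
With `f j = ⟪c, u j⟫`, the value of `c` at `p_γ^w` is `∑ i, w i * f (γ i)`. For strictly decreasing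
positive weights, `σ` is its unique maximizer over injective `γ` exactly when `σ` lists the `k`
largest values of `f` in strictly decreasing order, a condition in which the weights do not appear.
Necessity: swapping two entries of `σ`, or replacing one by an unused index, must lower the value.
Sufficiency: any injective `γ ≠ σ` is improved by such an exchange at its first disagreement with
`σ`, so the maximizer, which exists by finiteness, is `σ`.
-/

open Function

namespace Ordertope

variable {ι α : Type*}

def IsTopSorted [Preorder ι] (f : α → ℝ) (σ : ι → α) : Prop :=
  StrictAnti (f ∘ σ) ∧ ∀ a ∉ Set.range σ, ∀ i, f a < f (σ i)

theorem IsTopSorted.injective [LinearOrder ι] {f : α → ℝ} {σ : ι → α} (h : IsTopSorted f σ) :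
    Injective σ :=
  h.1.injective.of_comp

theorem injective_update_of_notMem_range [DecidableEq ι] {τ : ι → α}
    (hτ : Injective τ) (i : ι) {a : α} (ha : a ∉ Set.range τ) : Injective (update τ i a) := by
  intro x y hxy
  by_cases hx : x = i <;> by_cases hy : y = i
  · rw [hx, hy]
  · simp only [hx, update_self, update_of_ne hy] at hxy
    exact (ha ⟨y, hxy.symm⟩).elim
  · simp only [hy, update_self, update_of_ne hx] at hxy
    exact (ha ⟨x, hxy⟩).elim
  · exact hτ (by simpa only [update_of_ne hx, update_of_ne hy] using hxy)

variable [Fintype ι]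

def weightedValue (w : ι → ℝ) (f : α → ℝ) (τ : ι → α) : ℝ := ∑ i, w i * f (τ i)

def IsStrictMaximizer (w : ι → ℝ) (f : α → ℝ) (σ : ι → α) : Prop :=
  ∀ γ : ι → α, Injective γ → γ ≠ σ → weightedValue w f γ < weightedValue w f σ

theorem inner_sum_smul_eq_weightedValue {E : Type*} [NormedAddCommGroup E]
    [InnerProductSpace ℝ E] (c : E) (u : α → E) (w : ι → ℝ) (τ : ι → α) :
    ⟪c, ∑ i, w i • u (τ i)⟫ = weightedValue w (fun a => ⟪c, u a⟫) τ := by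
  simp only [inner_sum, real_inner_smul_right, weightedValue]

section Exchange

variable [DecidableEq ι] (w : ι → ℝ) (f : α → ℝ) (τ : ι → α)

theorem weightedValue_comp_swap (i j : ι) :
    weightedValue w f (τ ∘ Equiv.swap i j) =
      weightedValue w f τ + (w i - w j) * (f (τ j) - f (τ i)) := by
  rcases eq_or_ne i j with rfl | hij
  · simp [weightedValue]
  rw [← sub_eq_iff_eq_add', weightedValue, weightedValue, ← Finset.sum_sub_distrib,
    Fintype.sum_eq_add i j hij fun l hl => by simp [Equiv.swap_apply_of_ne_of_ne hl.1 hl.2]]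
  simp only [comp_apply, Equiv.swap_apply_left, Equiv.swap_apply_right]
  ring

theorem weightedValue_update (i : ι) (a : α) :
    weightedValue w f (update τ i a) = weightedValue w f τ + w i * (f a - f (τ i)) := by
  rw [← sub_eq_iff_eq_add', weightedValue, weightedValue, ← Finset.sum_sub_distrib,
    Fintype.sum_eq_single i fun l hl => by simp [update_of_ne hl]]
  simp only [update_self]
  ring

end Exchange

variable [LinearOrder ι] {w : ι → ℝ} {f : α → ℝ} {σ : ι → α}

theorem IsStrictMaximizer.isTopSorted (hw : StrictAnti w) (hwpos : ∀ i, 0 < w i)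
    (hσ : Injective σ) (h : IsStrictMaximizer w f σ) : IsTopSorted f σ := by
  refine ⟨fun i j hij => ?_, fun a ha i => ?_⟩
  · have hne : σ ∘ Equiv.swap i j ≠ σ := fun heq =>
      hij.ne (hσ (by simpa using congrFun heq j))
    have hlt := h _ (hσ.comp (Equiv.injective _)) hne
    rw [weightedValue_comp_swap] at hlt
    exact sub_neg.1 (neg_of_mul_neg_right (by linarith) (sub_pos.2 (hw hij)).le :
      f (σ j) - f (σ i) < 0)
  · have hne : update σ i a ≠ σ := fun heq => ha ⟨i, by simpa using (congrFun heq i).symm⟩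
    have hlt := h _ (injective_update_of_notMem_range hσ i ha) hne
    rw [weightedValue_update] at hlt
    exact sub_neg.1 (neg_of_mul_neg_right (by linarith) (hwpos i).le)

theorem IsTopSorted.exists_weightedValue_lt (hw : StrictAnti w) (hwpos : ∀ i, 0 < w i)
    (hσ : IsTopSorted f σ) {γ : ι → α} (hγ : Injective γ) (hne : γ ≠ σ) :
    ∃ γ' : ι → α, Injective γ' ∧ weightedValue w f γ < weightedValue w f γ' := by
  obtain ⟨i₀, hi₀ : γ i₀ ≠ σ i₀, hmin⟩ :=
    WellFounded.has_min wellFounded_lt {i | γ i ≠ σ i} (ne_iff.1 hne)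
  have hagree : ∀ j < i₀, γ j = σ j := fun j hj => not_not.1 fun h => hmin j h hj
  -- `γ i₀` is not `σ l` for any `l < i₀`, since `γ = σ` there and `γ` is injective
  have hlt : f (γ i₀) < f (σ i₀) := by
    by_cases hran : γ i₀ ∈ Set.range σ
    · obtain ⟨l, hl⟩ := hran
      have hi₀l : i₀ < l := by
        rcases lt_trichotomy l i₀ with hl' | rfl | hl'
        · exact absurd (hγ ((hagree l hl').trans hl)) hl'.ne
        · exact absurd hl.symm hi₀
        · exact hl'
      rw [← hl]
      exact hσ.1 hi₀l
    · exact hσ.2 _ hran i₀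
  by_cases hran : σ i₀ ∈ Set.range γ
  · obtain ⟨j, hj⟩ := hran
    have hi₀j : i₀ < j := by
      rcases lt_trichotomy j i₀ with hj' | rfl | hj'
      · exact absurd (hσ.injective ((hagree j hj').symm.trans hj)) hj'.ne
      · exact absurd hj hi₀
      · exact hj'
    refine ⟨γ ∘ Equiv.swap i₀ j, hγ.comp (Equiv.injective _), ?_⟩
    rw [weightedValue_comp_swap, hj]
    exact lt_add_of_pos_right _ (mul_pos (sub_pos.2 (hw hi₀j)) (sub_pos.2 hlt))
  · refine ⟨update γ i₀ (σ i₀), injective_update_of_notMem_range hγ i₀ hran, ?_⟩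
    rw [weightedValue_update]
    exact lt_add_of_pos_right _ (mul_pos (hwpos i₀) (sub_pos.2 hlt))

theorem IsTopSorted.isStrictMaximizer [Finite α] (hw : StrictAnti w) (hwpos : ∀ i, 0 < w i)
    (hσ : IsTopSorted f σ) : IsStrictMaximizer w f σ := by
  have not_maximal : ∀ γ, Injective γ → γ ≠ σ →
      ∃ γ', Injective γ' ∧ weightedValue w f γ < weightedValue w f γ' :=
    fun _ => hσ.exists_weightedValue_lt hw hwpos
  obtain ⟨γₘ, hγₘ, hmax⟩ := Set.exists_max_image {γ : ι → α | Injective γ} (weightedValue w f)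
    (Set.toFinite _) ⟨σ, hσ.injective⟩
  have hγₘσ : γₘ = σ := by
    by_contra hne
    obtain ⟨γ', hγ', hlt⟩ := not_maximal γₘ hγₘ hne
    exact (hmax γ' hγ').not_gt hlt
  intro γ hγ hne
  refine (hγₘσ ▸ hmax γ hγ).lt_of_ne fun heq => ?_
  obtain ⟨γ', hγ', hlt⟩ := not_maximal γ hγ hne
  exact (hmax γ' hγ').not_gt (hγₘσ ▸ heq ▸ hlt)

theorem isStrictMaximizer_iff_isTopSorted [Finite α] (hw : StrictAnti w)
    (hwpos : ∀ i, 0 < w i) (hσ : Injective σ) : IsStrictMaximizer w f σ ↔ IsTopSorted f σ :=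
  ⟨IsStrictMaximizer.isTopSorted hw hwpos hσ, IsTopSorted.isStrictMaximizer hw hwpos⟩

end Ordertope

open Ordertope in
theorem normal_fan_independent_of_weights_general
    (d n k : ℕ)
    (u : Fin n → EuclideanSpace ℝ (Fin d))
    (α β : Fin k → ℝ)
    (hα : StrictAnti α) (hαpos : ∀ i, 0 < α i)
    (hβ : StrictAnti β) (hβpos : ∀ i, 0 < β i)
    (σ : Fin k → Fin n) (hσ : Function.Injective σ)
    (c : EuclideanSpace ℝ (Fin d)) :
    (∀ γ : Fin k → Fin n, Function.Injective γ → γ ≠ σ →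
      ⟪c, (∑ i : Fin k, α i • u (γ i))⟫ < ⟪c, (∑ i : Fin k, α i • u (σ i))⟫) ↔
    (∀ γ : Fin k → Fin n, Function.Injective γ → γ ≠ σ →
      ⟪c, (∑ i : Fin k, β i • u (γ i))⟫ < ⟪c, (∑ i : Fin k, β i • u (σ i))⟫) := by
  simp only [inner_sum_smul_eq_weightedValue]
  exact (isStrictMaximizer_iff_isTopSorted hα hαpos hσ).trans
    (isStrictMaximizer_iff_isTopSorted hβ hβpos hσ).symm

/-- The normal fan of the `k`-ordertope is independent of the choice of strictly
decreasing positive weights: `c` strictly maximizes at `p_σ^α` over all injective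
`γ ≠ σ` if and only if it does so for the weights `β`. -/
theorem normal_fan_independent_of_weights
    (d n k : ℕ) (hd : 0 < d) (hn : 0 < n) (hk : 0 < k) (hkn : k ≤ n)
    (u : Fin n → EuclideanSpace ℝ (Fin d)) (hu : Function.Injective u)
    (α β : Fin k → ℝ)
    (hα : StrictAnti α) (hαpos : ∀ i, 0 < α i)
    (hβ : StrictAnti β) (hβpos : ∀ i, 0 < β i)
    (σ : Fin k → Fin n) (hσ : Function.Injective σ)
    (c : EuclideanSpace ℝ (Fin d)) :
    (∀ γ : Fin k → Fin n, Function.Injective γ → γ ≠ σ →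
      ⟪c, (∑ i : Fin k, α i • u (γ i))⟫ < ⟪c, (∑ i : Fin k, α i • u (σ i))⟫) ↔
    (∀ γ : Fin k → Fin n, Function.Injective γ → γ ≠ σ →
      ⟪c, (∑ i : Fin k, β i • u (γ i))⟫ < ⟪c, (∑ i : Fin k, β i • u (σ i))⟫) :=
  normal_fan_independent_of_weights_general d n k u α β hα hαpos hβ hβpos σ hσ c
end

section
/- Greedy sorted selection maximizes any functional over the k-ordertope: let c be a linear functional and let σ : Fin k → Fin n be injective with ⟨c,u(σ 1)⟩ ≥ ⟨c,u(σ 2)⟩ ≥ ... ≥ ⟨c,u(σ k)⟩ and ⟨c,u(σ k)⟩ ≥ ⟨c,u j⟩ for every index j not in the range of σ (i.e. σ selects k indices achieving the k largest values of ⟨c,u j⟩ in decreasing order). Then for every injective γ : Fin k → Fin n one has ⟨c, p_γ⟩ ≤ ⟨c, p_σ⟩; hence p_σ maximizes c over the k-ordertope P_k. -/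
open scoped RealInnerProductSpace
open Finset

/-!
By linearity `⟪c, p_γ⟫ = ∑ α i * f (γ i)` with `f j = ⟪c, u j⟫`. Because `σ` picks the largest
values of `f` in decreasing order, every prefix sum `∑_{i ≤ m} f (γ i)` is at most the
corresponding prefix sum for `σ`: the two image sets have the same size and are separated by the
threshold `f (σ m)`. Summation by parts against the nonnegative decreasing weights `α` turns this
prefix domination into `⟪c, p_γ⟫ ≤ ⟪c, p_σ⟫`, and a half-space containing all vertices contains
their convex hull.
-/

theorem sum_le_sum_of_card_eq_of_sdiff_le_le_sdiff {α M : Type*} [DecidableEq α]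
    [AddCommMonoid M] [PartialOrder M] [IsOrderedAddMonoid M]
    {s t : Finset α} {f : α → M} (hst : #s = #t) (b : M)
    (hs : ∀ j ∈ s \ t, f j ≤ b) (ht : ∀ j ∈ t \ s, b ≤ f j) :
    ∑ j ∈ s, f j ≤ ∑ j ∈ t, f j := by
  have hsdiff : ∑ j ∈ s \ t, f j ≤ ∑ j ∈ t \ s, f j :=
    calc ∑ j ∈ s \ t, f j ≤ #(s \ t) • b := sum_le_card_nsmul _ _ _ hs
      _ = #(t \ s) • b := by rw [card_sdiff_comm hst]
      _ ≤ ∑ j ∈ t \ s, f j := card_nsmul_le_sum _ _ _ ht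
  rw [← sum_inter_add_sum_sdiff s t, ← sum_inter_add_sum_sdiff t s, inter_comm]
  exact add_le_add le_rfl hsdiff

theorem sum_mul_nonneg_of_antitoneOn_of_prefix_sum_nonneg {ι R : Type*} [LinearOrder ι]
    [CommRing R] [PartialOrder R] [IsOrderedRing R] (s : Finset ι) {a z : ι → R}
    (ha : AntitoneOn a s) (ha0 : ∀ i ∈ s, 0 ≤ a i)
    (hz : ∀ m ∈ s, 0 ≤ ∑ i ∈ s with i ≤ m, z i) :
    0 ≤ ∑ i ∈ s, a i * z i := by
  classical
  induction s using Finset.induction_on_max generalizing a with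
  | empty => simp
  | insert M s hlt ih =>
    have hM : M ∉ s := fun h => lt_irrefl M (hlt M h)
    have hfilter : ∀ m ∈ s, {i ∈ insert M s | i ≤ m} = {i ∈ s | i ≤ m} := fun m hm => by
      rw [filter_insert, if_neg (not_le.2 (hlt m hm))]
    -- Peel off the constant weight `a M`; the remaining weights `a i - a M` still qualify on `s`.
    have hsplit : ∑ i ∈ insert M s, a i * z i
        = ∑ i ∈ s, (a i - a M) * z i + a M * ∑ i ∈ insert M s, z i := by
      simp only [sum_insert hM, sub_mul, sum_sub_distrib, mul_add, mul_sum]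
      ring
    rw [hsplit]
    refine add_nonneg (ih ?_ ?_ ?_) (mul_nonneg (ha0 M (mem_insert_self M s)) ?_)
    · exact fun i hi j hj hij => sub_le_sub_right
        (ha (mem_insert_of_mem hi) (mem_insert_of_mem hj) hij) _
    · exact fun i hi => sub_nonneg.2
        (ha (mem_insert_of_mem hi) (mem_insert_self M s) (hlt i hi).le)
    · exact fun m hm => hfilter m hm ▸ hz m (mem_insert_of_mem hm)
    · have hzM := hz M (mem_insert_self M s)
      rwa [filter_true_of_mem fun i hi => ?_] at hzM
      rcases mem_insert.1 hi with rfl | hi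
      exacts [le_rfl, (hlt i hi).le]

section Greedy

variable {ι κ : Type*} [LinearOrder ι] [Fintype ι] [DecidableEq κ] {f : κ → ℝ} {σ γ : ι → κ}

theorem apply_le_of_notMem_image_prefix (hord : Antitone (f ∘ σ))
    (hout : ∀ j ∉ Set.range σ, ∀ i, f j ≤ f (σ i)) {m : ι} {j : κ}
    (hj : j ∉ image σ {i | i ≤ m}) : f j ≤ f (σ m) := by
  by_cases hr : j ∈ Set.range σ
  · obtain ⟨l, rfl⟩ := hr
    have hml : m < l := not_le.1 fun h => hj (mem_image_of_mem σ (by simpa using h))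
    exact hord hml.le
  · exact hout j hr m

theorem sum_prefix_le_of_greedy (hσ : σ.Injective) (hγ : γ.Injective)
    (hord : Antitone (f ∘ σ)) (hout : ∀ j ∉ Set.range σ, ∀ i, f j ≤ f (σ i)) (m : ι) :
    ∑ i with i ≤ m, f (γ i) ≤ ∑ i with i ≤ m, f (σ i) := by
  rw [← sum_image hγ.injOn, ← sum_image hσ.injOn]
  refine sum_le_sum_of_card_eq_of_sdiff_le_le_sdiff ?_ (f (σ m)) ?_ ?_
  · rw [card_image_of_injective _ hγ, card_image_of_injective _ hσ]
  · exact fun j hj => apply_le_of_notMem_image_prefix hord hout (mem_sdiff.1 hj).2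
  · intro j hj
    obtain ⟨l, hl, rfl⟩ := mem_image.1 (mem_sdiff.1 hj).1
    exact hord (mem_filter.1 hl).2

theorem sum_mul_le_sum_mul_of_greedy {a : ι → ℝ} (ha : Antitone a) (ha0 : ∀ i, 0 ≤ a i)
    (hσ : σ.Injective) (hγ : γ.Injective)
    (hord : Antitone (f ∘ σ)) (hout : ∀ j ∉ Set.range σ, ∀ i, f j ≤ f (σ i)) :
    ∑ i, a i * f (γ i) ≤ ∑ i, a i * f (σ i) := by
  rw [← sub_nonneg, ← sum_sub_distrib]
  simp only [← mul_sub]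
  refine sum_mul_nonneg_of_antitoneOn_of_prefix_sum_nonneg univ (ha.antitoneOn _)
    (fun i _ => ha0 i) fun m _ => ?_
  rw [sum_sub_distrib, sub_nonneg]
  exact sum_prefix_le_of_greedy hσ hγ hord hout m

end Greedy

theorem inner_le_of_mem_convexHull {E : Type*} [NormedAddCommGroup E] [InnerProductSpace ℝ E]
    {s : Set E} {c : E} {b : ℝ} (hs : ∀ y ∈ s, ⟪c, y⟫ ≤ b) {x : E} (hx : x ∈ convexHull ℝ s) :
    ⟪c, x⟫ ≤ b :=
  convexHull_min hs (convex_halfSpace_le (innerₛₗ ℝ c).isLinear b) hx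

theorem greedy_selection_maximizes_general
    (d n k : ℕ) (hk : 0 < k)
    (u : Fin n → EuclideanSpace ℝ (Fin d))
    (α : Fin k → ℝ) (hα : StrictAnti α) (hαpos : ∀ i, 0 < α i)
    (σ : Fin k → Fin n) (hσ : Function.Injective σ)
    (c : EuclideanSpace ℝ (Fin d))
    (hord : ∀ i j : Fin k, i ≤ j → ⟪c, u (σ j)⟫ ≤ ⟪c, u (σ i)⟫)
    (hout : ∀ j : Fin n, j ∉ Set.range σ →
      ⟪c, u j⟫ ≤ ⟪c, u (σ ⟨k - 1, Nat.sub_lt hk Nat.one_pos⟩)⟫) :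
    (∀ γ : Fin k → Fin n, Function.Injective γ →
      ⟪c, (∑ i : Fin k, α i • u (γ i))⟫ ≤ ⟪c, (∑ i : Fin k, α i • u (σ i))⟫) ∧
    (∀ x ∈ convexHull ℝ
        {x : EuclideanSpace ℝ (Fin d) |
          ∃ τ : Fin k → Fin n, Function.Injective τ ∧ x = ∑ i : Fin k, α i • u (τ i)},
      ⟪c, x⟫ ≤ ⟪c, (∑ i : Fin k, α i • u (σ i))⟫) := by
  have hout' : ∀ j ∉ Set.range σ, ∀ i, ⟪c, u j⟫ ≤ ⟪c, u (σ i)⟫ := fun j hj i =>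
    (hout j hj).trans (hord _ _ (Fin.le_def.2 (Nat.le_sub_one_of_lt i.isLt)))
  have hvertex : ∀ γ : Fin k → Fin n, Function.Injective γ →
      ⟪c, (∑ i : Fin k, α i • u (γ i))⟫ ≤ ⟪c, (∑ i : Fin k, α i • u (σ i))⟫ := by
    intro γ hγ
    simp only [inner_sum, real_inner_smul_right]
    exact sum_mul_le_sum_mul_of_greedy (f := fun j => ⟪c, u j⟫) hα.antitone (fun i => (hαpos i).le) hσ hγ
      (fun i j => hord i j) hout'
  refine ⟨hvertex, fun x hx => inner_le_of_mem_convexHull ?_ hx⟩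
  rintro _ ⟨τ, hτ, rfl⟩
  exact hvertex τ hτ

/-- Greedy sorted selection maximizes any functional over the `k`-ordertope:
if `σ` selects `k` indices achieving the `k` largest values of `⟪c, u j⟫` in
decreasing order, then `⟪c, p_γ⟫ ≤ ⟪c, p_σ⟫` for every injective `γ`; hence
`p_σ` maximizes `c` over the `k`-ordertope `P_k`. -/
theorem greedy_selection_maximizes
    (d n k : ℕ) (hd : 0 < d) (hn : 0 < n) (hk : 0 < k) (hkn : k ≤ n)
    (u : Fin n → EuclideanSpace ℝ (Fin d)) (hu : Function.Injective u)
    (α : Fin k → ℝ) (hα : StrictAnti α) (hαpos : ∀ i, 0 < α i)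
    (σ : Fin k → Fin n) (hσ : Function.Injective σ)
    (c : EuclideanSpace ℝ (Fin d))
    (hord : ∀ i j : Fin k, i ≤ j → ⟪c, u (σ j)⟫ ≤ ⟪c, u (σ i)⟫)
    (hout : ∀ j : Fin n, j ∉ Set.range σ →
      ⟪c, u j⟫ ≤ ⟪c, u (σ ⟨k - 1, Nat.sub_lt hk Nat.one_pos⟩)⟫) :
    (∀ γ : Fin k → Fin n, Function.Injective γ →
      ⟪c, (∑ i : Fin k, α i • u (γ i))⟫ ≤ ⟪c, (∑ i : Fin k, α i • u (σ i))⟫) ∧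
    (∀ x ∈ convexHull ℝ
        {x : EuclideanSpace ℝ (Fin d) |
          ∃ τ : Fin k → Fin n, Function.Injective τ ∧ x = ∑ i : Fin k, α i • u (τ i)},
      ⟪c, x⟫ ≤ ⟪c, (∑ i : Fin k, α i • u (σ i))⟫) :=
  greedy_selection_maximizes_general d n k hk u α hα hαpos σ hσ c hord hout
end

section
/- First half of Lemma 4.1: let v ∈ P be a point for which there exists a functional c with every coordinate strictly positive such that ⟨c,v⟩ > ⟨c,x⟩ for all x ∈ P with x ≠ v (i.e. v is a vertex of P whose normal cone meets the open positive orthant). Then there exists N₀ > 0 such that for every N ≥ N₀, v is an extreme point (vertex) of Q_N = conv(P ∪ {-N e_1, ..., -N e_d}). -/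
open scoped RealInnerProductSpace

/-!
For `N` large, `⟪c, -N eⱼ⟫ = -N cⱼ < ⟪c, v⟫` because every `cⱼ > 0`, so `c` is uniquely
maximized at `v` over `conv V ∪ {-N e₁, …, -N e_d}`. A point of `A` at which a linear functional
is uniquely maximized over `A` is an extreme point of `conv A`: the hull lies in the convex set
`insert x {y | l y < l x}`, so removing `x` from it leaves a convex set.
-/

open Set

section

variable {𝕜 E : Type*} [Field 𝕜] [LinearOrder 𝕜] [IsStrictOrderedRing 𝕜] [AddCommGroup E]
  [Module 𝕜 E]

theorem convex_insert_setOf_lt (l : E →ₗ[𝕜] 𝕜) (x : E) :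
    Convex 𝕜 (insert x {y | l y < l x}) := by
  have hle : ∀ y ∈ insert x {y | l y < l x}, l y ≤ l x := by
    rintro y (rfl | hy)
    exacts [le_rfl, hy.le]
  rw [convex_iff_openSegment_subset]
  rintro y hy z hz _ ⟨a, b, ha, hb, hab, rfl⟩
  by_cases hyz : y = x ∧ z = x
  · obtain ⟨rfl, rfl⟩ := hyz
    exact Or.inl (Convex.combo_self hab _)
  · right
    have hlt : a * l y + b * l z < a * l x + b * l x := by
      rcases not_and_or.1 hyz with hy' | hz'
      · have hy : l y < l x := hy.resolve_left hy'
        nlinarith [hle z hz]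
      · have hz : l z < l x := hz.resolve_left hz'
        nlinarith [hle y hy]
    simpa [← add_mul, hab] using hlt

theorem mem_extremePoints_convexHull_of_forall_lt_s6 (l : E →ₗ[𝕜] 𝕜) {A : Set E} {x : E}
    (hx : x ∈ A) (h : ∀ y ∈ A, y ≠ x → l y < l x) : x ∈ (convexHull 𝕜 A).extremePoints 𝕜 := by
  have hK : convexHull 𝕜 A ⊆ insert x {y | l y < l x} :=
    convexHull_min (fun y hy => (eq_or_ne y x).imp id (h y hy)) (convex_insert_setOf_lt l x)
  have hdiff : convexHull 𝕜 A \ {x} = convexHull 𝕜 A ∩ {y | l y < l x} := by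
    ext y
    refine ⟨fun ⟨hy, hyx⟩ => ⟨hy, (hK hy).resolve_left hyx⟩, fun ⟨hy, hlt⟩ => ⟨hy, ?_⟩⟩
    rintro rfl
    exact lt_irrefl _ hlt
  rw [(convex_convexHull 𝕜 A).mem_extremePoints_iff_convex_sdiff, hdiff]
  exact ⟨subset_convexHull 𝕜 A hx,
    (convex_convexHull 𝕜 A).inter (convex_halfSpace_lt l.isLinear _)⟩

end

theorem vertex_of_QN_of_positive_normal_cone_general
    (d : ℕ)
    (V : Finset (EuclideanSpace ℝ (Fin d)))
    (v : EuclideanSpace ℝ (Fin d))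
    (hv : v ∈ convexHull ℝ (V : Set (EuclideanSpace ℝ (Fin d))))
    (c : EuclideanSpace ℝ (Fin d)) (hc : ∀ j : Fin d, 0 < c j)
    (hmax : ∀ x ∈ convexHull ℝ (V : Set (EuclideanSpace ℝ (Fin d))),
      x ≠ v → ⟪c, x⟫ < ⟪c, v⟫) :
    ∃ N₀ : ℝ, 0 < N₀ ∧ ∀ N : ℝ, N₀ ≤ N →
      v ∈ Set.extremePoints ℝ (convexHull ℝ
        ((V : Set (EuclideanSpace ℝ (Fin d))) ∪
          Set.range (fun j : Fin d =>
            (-N : ℝ) • (EuclideanSpace.single j (1 : ℝ))))) := by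
  obtain ⟨N₀, hN₀⟩ := Filter.eventually_atTop.1 <| Filter.eventually_all.2 fun j =>
    (Filter.tendsto_id.atTop_mul_const (hc j)).eventually_gt_atTop (-⟪c, v⟫)
  refine ⟨max N₀ 1, by positivity, fun N hN => ?_⟩
  rw [← convexHull_convexHull_union_left]
  refine mem_extremePoints_convexHull_of_forall_lt_s6 (innerₛₗ ℝ c) (Or.inl hv) ?_
  rintro y (hy | ⟨j, rfl⟩) hyv
  · exact hmax y hy hyv
  · have hNj := hN₀ N (le_of_max_le_left hN) j
    simp only [innerₛₗ_apply_apply, inner_smul_right, EuclideanSpace.inner_single_right,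
      Real.ringHom_apply, one_mul, neg_mul, id_eq] at hNj ⊢
    linarith

/-- First half of Lemma 4.1: if `v` is a vertex of `P = conv V` whose normal cone
meets the open positive orthant (i.e. some strictly positive functional `c` is
uniquely maximized at `v` over `P`), then for all sufficiently large `N`, `v` is
an extreme point of `Q_N = conv (P ∪ {-N e₁, …, -N e_d})`. -/
theorem vertex_of_QN_of_positive_normal_cone
    (d : ℕ) (hd : 0 < d)
    (V : Finset (EuclideanSpace ℝ (Fin d))) (hV : V.Nonempty)
    (v : EuclideanSpace ℝ (Fin d))
    (hv : v ∈ convexHull ℝ (V : Set (EuclideanSpace ℝ (Fin d))))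
    (c : EuclideanSpace ℝ (Fin d)) (hc : ∀ j : Fin d, 0 < c j)
    (hmax : ∀ x ∈ convexHull ℝ (V : Set (EuclideanSpace ℝ (Fin d))),
      x ≠ v → ⟪c, x⟫ < ⟪c, v⟫) :
    ∃ N₀ : ℝ, 0 < N₀ ∧ ∀ N : ℝ, N₀ ≤ N →
      v ∈ Set.extremePoints ℝ (convexHull ℝ
        ((V : Set (EuclideanSpace ℝ (Fin d))) ∪
          Set.range (fun j : Fin d =>
            (-N : ℝ) • (EuclideanSpace.single j (1 : ℝ))))) :=
  vertex_of_QN_of_positive_normal_cone_general d V v hv c hc hmax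
end

section
/- Farkas-type separation step in the proof of Lemma 4.1: let v ∈ P be a point such that for every nonzero nonnegative functional c there exists x ∈ P with ⟨c,x⟩ > ⟨c,v⟩ (i.e. v does not weakly maximize any nonzero nonnegative functional over P). Then there exists a point x ∈ P such that x_j > v_j for every coordinate j = 1, ..., d. -/
/-!
If no point of the convex set `P` strictly dominates `v`, then `P` is disjoint from the open
orthant `{y | v < y}`, and Hahn–Banach separates the two by a functional `f`. Since `v` lies in
`P` and in the closure of the orthant, `f` takes the separating value at `v`; the orthant being
`v` plus a cone of coordinatewise-positive directions then forces `-f` to be nonnegative and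
nonzero, while `-f` is maximized over `P` at `v`.
-/

open scoped RealInnerProductSpace
open Filter Topology

namespace EuclideanSpace

variable {ι : Type*} [Fintype ι]

theorem isOpen_setOf_forall_lt (a : EuclideanSpace ℝ ι) :
    IsOpen {y : EuclideanSpace ℝ ι | ∀ j, a j < y j} := by
  simp only [Set.ofPred_forall]
  exact isOpen_iInter_of_finite fun j => isOpen_lt continuous_const (PiLp.continuous_apply 2 _ j)

omit [Fintype ι] in
theorem convex_setOf_forall_lt (a : EuclideanSpace ℝ ι) :
    Convex ℝ {y : EuclideanSpace ℝ ι | ∀ j, a j < y j} := by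
  simp only [Set.ofPred_forall]
  exact convex_iInter fun j => convex_halfSpace_gt (proj j : EuclideanSpace ℝ ι →L[ℝ] ℝ).isLinear _

theorem setOf_forall_le_subset_closure_setOf_forall_lt (a : EuclideanSpace ℝ ι) :
    {y : EuclideanSpace ℝ ι | ∀ j, a j ≤ y j} ⊆ closure {y | ∀ j, a j < y j} := by
  intro y hy
  have hlim : Tendsto (fun t : ℝ => y + t • WithLp.toLp 2 1) (𝓝[>] 0) (𝓝 y) := by
    have : Continuous (fun t : ℝ => y + t • WithLp.toLp 2 (1 : ι → ℝ)) :=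
      continuous_const.add (continuous_id.smul continuous_const)
    simpa using (this.tendsto 0).mono_left nhdsWithin_le_nhds
  refine mem_closure_of_tendsto hlim (eventually_nhdsWithin_of_forall fun t ht j => ?_)
  simpa using add_lt_add_of_le_of_lt (hy j) (Set.mem_Ioi.1 ht)

theorem _root_.Convex.exists_nonneg_isMaxOn_inner {s : Set (EuclideanSpace ℝ ι)} (hs : Convex ℝ s)
    {v : EuclideanSpace ℝ ι} (hv : v ∈ s) (hdom : ∀ x ∈ s, ∃ j, x j ≤ v j) :
    ∃ c : EuclideanSpace ℝ ι, c ≠ 0 ∧ (∀ j, 0 ≤ c j) ∧ IsMaxOn (fun x => ⟪c, x⟫) s v := by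
  classical
  set U := {y : EuclideanSpace ℝ ι | ∀ j, v j < y j}
  have hdisj : Disjoint U s := Set.disjoint_left.2 fun y hy hys => by
    obtain ⟨j, hj⟩ := hdom y hys
    exact (hy j).not_ge hj
  obtain ⟨f, u, hfU, hfs⟩ :=
    geometric_hahn_banach_open (convex_setOf_forall_lt v) (isOpen_setOf_forall_lt v) hs hdisj
  set c := -(InnerProductSpace.toDual ℝ _).symm f
  have hc : ∀ x, ⟪c, x⟫ = -f x := fun x => by
    simp [c, inner_neg_left, InnerProductSpace.toDual_symm_apply]
  -- `f ≤ u` passes from the open orthant `U` to its closure.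
  have hfle : ∀ y, (∀ j, v j ≤ y j) → f y ≤ u := fun y hy =>
    closure_minimal (fun z hz => (hfU z hz).le) (isClosed_le f.continuous continuous_const)
      (setOf_forall_le_subset_closure_setOf_forall_lt v hy)
  have hfv : f v = u := le_antisymm (hfle v fun _ => le_rfl) (hfs v hv)
  refine ⟨c, fun h0 => ?_, fun j => ?_, fun x hx => ?_⟩
  · have hf1 := hfU (v + WithLp.toLp 2 1) (by simp)
    have hc1 := hc (WithLp.toLp 2 1)
    rw [map_add, hfv] at hf1
    rw [h0, inner_zero_left] at hc1
    linarith
  · have hf := hfle (v + single j 1) fun k => by by_cases hk : k = j <;> simp [hk]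
    have hcj : ⟪c, single j 1⟫ = c j := by simp [inner_single_right]
    rw [map_add, hfv] at hf
    rw [hc] at hcj
    linarith
  · show ⟪c, x⟫ ≤ ⟪c, v⟫
    rw [hc, hc, neg_le_neg_iff, hfv]
    exact hfs x hx

end EuclideanSpace

theorem exists_dominating_point_of_no_nonneg_maximizer_general
    (d : ℕ)
    (V : Finset (EuclideanSpace ℝ (Fin d)))
    (v : EuclideanSpace ℝ (Fin d))
    (hv : v ∈ convexHull ℝ (V : Set (EuclideanSpace ℝ (Fin d))))
    (hnotmax : ∀ c : EuclideanSpace ℝ (Fin d), c ≠ 0 → (∀ j : Fin d, 0 ≤ c j) →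
      ∃ x ∈ convexHull ℝ (V : Set (EuclideanSpace ℝ (Fin d))), ⟪c, v⟫ < ⟪c, x⟫) :
    ∃ x ∈ convexHull ℝ (V : Set (EuclideanSpace ℝ (Fin d))),
      ∀ j : Fin d, v j < x j := by
  by_contra! hdom
  obtain ⟨c, hc0, hc, hmax⟩ := (convex_convexHull ℝ _).exists_nonneg_isMaxOn_inner hv hdom
  obtain ⟨x, hx, hlt⟩ := hnotmax c hc0 hc
  exact (hmax hx).not_gt hlt

/-- Farkas-type separation step in the proof of Lemma 4.1: if `v ∈ P = conv V`
does not weakly maximize any nonzero nonnegative functional over `P`, then there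
is a point `x ∈ P` which strictly dominates `v` in every coordinate. -/
theorem exists_dominating_point_of_no_nonneg_maximizer
    (d : ℕ) (hd : 0 < d)
    (V : Finset (EuclideanSpace ℝ (Fin d))) (hV : V.Nonempty)
    (v : EuclideanSpace ℝ (Fin d))
    (hv : v ∈ convexHull ℝ (V : Set (EuclideanSpace ℝ (Fin d))))
    (hnotmax : ∀ c : EuclideanSpace ℝ (Fin d), c ≠ 0 → (∀ j : Fin d, 0 ≤ c j) →
      ∃ x ∈ convexHull ℝ (V : Set (EuclideanSpace ℝ (Fin d))), ⟪c, v⟫ < ⟪c, x⟫) :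
    ∃ x ∈ convexHull ℝ (V : Set (EuclideanSpace ℝ (Fin d))),
      ∀ j : Fin d, v j < x j :=
  exists_dominating_point_of_no_nonneg_maximizer_general d V v hv hnotmax
end

section
/- Second half of Lemma 4.1: let v ∈ P be a point such that for every nonzero nonnegative functional c there exists x ∈ P with ⟨c,x⟩ > ⟨c,v⟩ (i.e. v does not lie on the non-negative envelope of P). Then there exists N₀ > 0 such that for every N ≥ N₀, v is not an extreme point of Q_N = conv(P ∪ {-N e_1, ..., -N e_d}). Equivalently, for N sufficiently large, every point of P that is an extreme point of Q_N weakly maximizes some nonzero nonnegative functional over P. -/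
/-!
If no nonzero nonnegative functional is weakly maximized over `P` at `w ∈ P`, separating `P`
from the open orthant `{y | w < y}` by Hahn–Banach gives a point `p ∈ P` with `w < p`
coordinatewise. For large `N` the reflected point `w - (p - w)` lies in `Q_N`: it sits on the
segment from `w` to the simplex `conv {-N eⱼ}`. Hence `w` is the midpoint of two distinct
points of `Q_N`. As `P` is bounded, for large `N` the extreme points of `Q_N` lying in `P` are
among the finitely many points of `V`, so one threshold serves all of them.
-/

open scoped RealInnerProductSpace
open Set Filter

lemma le_of_forall_pos_add_mul_lt {a b u : ℝ} (h : ∀ s > 0, a + s * b < u) : a ≤ u := by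
  have hlim : Tendsto (fun s : ℝ => a + s * b) (nhdsWithin 0 (Ioi 0)) (nhds a) :=
    tendsto_nhdsWithin_of_tendsto_nhds
      (Continuous.tendsto' (f := fun s : ℝ => a + s * b) (by fun_prop) 0 a (by simp))
  exact le_of_tendsto hlim (eventually_nhdsWithin_of_forall fun s hs => (h s hs).le)

lemma nonpos_of_forall_pos_add_mul_lt {a b u : ℝ} (h : ∀ t > 0, a + t * b < u) : b ≤ 0 := by
  by_contra! hb
  have := h (|u - a| / b + 1) (by positivity)
  rw [add_mul, div_mul_cancel₀ _ hb.ne'] at this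
  linarith [le_abs_self (u - a)]

lemma convex_setOf_forall_lt {ι : Type*} (w : EuclideanSpace ℝ ι) :
    Convex ℝ {y : EuclideanSpace ℝ ι | ∀ j, w j < y j} := by
  simp only [ofPred_forall]
  exact convex_iInter fun j => convex_halfSpace_gt (EuclideanSpace.proj j).isLinear _

section

variable {ι : Type*} [Fintype ι]

def IsNonnegMaximizer (K : Set (EuclideanSpace ℝ ι)) (w : EuclideanSpace ℝ ι) : Prop :=
  ∃ c : EuclideanSpace ℝ ι, c ≠ 0 ∧ (∀ j, 0 ≤ c j) ∧ ∀ x ∈ K, ⟪c, x⟫ ≤ ⟪c, w⟫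

lemma isOpen_setOf_forall_lt (w : EuclideanSpace ℝ ι) :
    IsOpen {y : EuclideanSpace ℝ ι | ∀ j, w j < y j} := by
  simp only [ofPred_forall]
  exact isOpen_iInter_of_finite fun j => isOpen_lt continuous_const (by fun_prop)

lemma exists_forall_lt_of_not_isNonnegMaximizer {K : Set (EuclideanSpace ℝ ι)}
    (hK : Convex ℝ K) {w : EuclideanSpace ℝ ι} (hw : w ∈ K) (h : ¬ IsNonnegMaximizer K w) :
    ∃ p ∈ K, ∀ j, w j < p j := by
  classical
  by_contra! hdom
  obtain ⟨f, u, hfS, hfK⟩ := geometric_hahn_banach_open (convex_setOf_forall_lt w)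
    (isOpen_setOf_forall_lt w) hK
    (disjoint_left.2 fun y hyS hyK => let ⟨j, hj⟩ := hdom y hyK; (hyS j).not_ge hj)
  -- The separated set is `w` plus an open cone: `f < u` on it forces `f ≤ 0` on the cone,
  -- and letting the point tend to `w` gives `f w ≤ u`.
  set o : EuclideanSpace ℝ ι := WithLp.toLp 2 fun _ => 1
  have hmemS : ∀ z : EuclideanSpace ℝ ι, (∀ j, 0 ≤ z j) → ∀ s > (0 : ℝ),
      w + z + s • o ∈ {y : EuclideanSpace ℝ ι | ∀ j, w j < y j} := fun z hz s hs j => by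
    simp only [PiLp.add_apply, PiLp.smul_apply, smul_eq_mul, mul_one, o]
    linarith [hz j]
  have hfw : f w ≤ u := le_of_forall_pos_add_mul_lt fun s hs => by
    simpa using hfS _ (hmemS 0 (fun _ => le_rfl) s hs)
  have hfe : ∀ j, f (EuclideanSpace.single j 1) ≤ 0 := fun j =>
    nonpos_of_forall_pos_add_mul_lt (a := f w + f o) (u := u) fun t ht => by
      have := hfS _ (hmemS (t • EuclideanSpace.single j 1)
        (fun i => by by_cases hij : i = j <;> simp [hij, ht.le]) 1 one_pos)
      simp only [map_add, map_smul, one_smul, smul_eq_mul] at this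
      linarith
  set c : EuclideanSpace ℝ ι := -(InnerProductSpace.toDual ℝ _).symm f
  have hc : ∀ x, ⟪c, x⟫ = -f x := fun x => by
    rw [inner_neg_left, InnerProductSpace.toDual_symm_apply]
  refine h ⟨c, fun hc0 => ?_, fun j => ?_, fun x hx => ?_⟩
  · have h1 := hfS _ (hmemS 0 (fun _ => le_rfl) 1 one_pos)
    have h2 := hfK w hw
    have hf0 : ∀ x, f x = 0 := fun x => by simpa [hc0] using (hc x).symm
    rw [hf0] at h1 h2
    linarith
  · have := hc (EuclideanSpace.single j 1)
    rw [EuclideanSpace.inner_single_right] at this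
    simp only [Real.ringHom_apply, one_mul] at this
    linarith [hfe j]
  · rw [hc, hc]
    linarith [hfK x hx]

variable [DecidableEq ι]

def negBasisVertices (N : ℝ) : Set (EuclideanSpace ℝ ι) :=
  range fun j => (-N) • EuclideanSpace.single j (1 : ℝ)

lemma mem_convexHull_negBasisVertices {N : ℝ} (hN : 0 < N) {z : EuclideanSpace ℝ ι}
    (hz : ∀ j, z j ≤ 0) (hsum : ∑ j, z j = -N) : z ∈ convexHull ℝ (negBasisVertices N) := by
  refine mem_convexHull_of_exists_fintype (fun j => -z j / N)
    (fun j => (-N) • EuclideanSpace.single j (1 : ℝ))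
    (fun j => div_nonneg (neg_nonneg.2 (hz j)) hN.le) ?_ (fun j => ⟨j, rfl⟩) ?_
  · rw [← Finset.sum_div, Finset.sum_neg_distrib, hsum, neg_neg, div_self hN.ne']
  · conv_rhs => rw [← (EuclideanSpace.basisFun ι ℝ).sum_repr z]
    refine Finset.sum_congr rfl fun j _ => ?_
    rw [smul_smul, div_mul_eq_mul_div, mul_neg, neg_mul, neg_neg, mul_div_cancel_right₀ _ hN.ne']
    simp

lemma eventually_sub_mem_convexHull_insert_negBasisVertices [Nonempty ι]
    (x a : EuclideanSpace ℝ ι) (ha : ∀ j, 0 < a j) :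
    ∀ᶠ N in atTop, x - a ∈ convexHull ℝ (insert x (negBasisVertices N)) := by
  set A := ∑ j, a j
  have hA : 0 < A := Finset.sum_pos (fun j _ => ha j) Finset.univ_nonempty
  set t : ℝ → ℝ := fun N => (∑ j, x j + N) / A
  have ht : Tendsto t atTop atTop :=
    (tendsto_atTop_add_const_left _ _ tendsto_id).atTop_div_const hA
  filter_upwards [eventually_gt_atTop 0, ht.eventually_ge_atTop 1,
    eventually_all.2 fun j => ht.eventually_ge_atTop (x j / a j)] with N hN ht1 htx
  -- `x - a` lies on the segment from `x` to the point `z` where the ray `x - t • a` meets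
  -- the simplex spanned by `negBasisVertices N`.
  set z := x - t N • a
  have hz : z ∈ convexHull ℝ (negBasisVertices N) := by
    refine mem_convexHull_negBasisVertices hN (fun j => ?_) ?_
    · have := (div_le_iff₀ (ha j)).1 (htx j)
      simp only [z, WithLp.ofLp_sub, WithLp.ofLp_smul, Pi.sub_apply, Pi.smul_apply, smul_eq_mul]
      linarith
    · simp only [z, WithLp.ofLp_sub, WithLp.ofLp_smul, Pi.sub_apply, Pi.smul_apply, smul_eq_mul,
        Finset.sum_sub_distrib, ← Finset.mul_sum, t]
      field_simp
      ring
  have htpos : 0 < t N := by linarith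
  have hxa : x - a = (1 - (t N)⁻¹) • x + (t N)⁻¹ • z := by
    rw [smul_sub, smul_smul, inv_mul_cancel₀ htpos.ne']
    module
  rw [hxa]
  exact convex_convexHull ℝ _ (subset_convexHull ℝ _ (mem_insert x _))
    (convexHull_mono (subset_insert x _) hz) (by simpa using inv_le_one_of_one_le₀ ht1)
    (by positivity) (by ring)

lemma eventually_notMem_extremePoints_of_lt [Nonempty ι] {s : Set (EuclideanSpace ℝ ι)}
    {w p : EuclideanSpace ℝ ι} (hw : w ∈ convexHull ℝ s) (hp : p ∈ convexHull ℝ s)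
    (hwp : ∀ j, w j < p j) :
    ∀ᶠ N in atTop, w ∉ (convexHull ℝ (s ∪ negBasisVertices N)).extremePoints ℝ := by
  filter_upwards [eventually_sub_mem_convexHull_insert_negBasisVertices w (p - w)
    fun j => by simpa using hwp j] with N hN hext
  have hsub : convexHull ℝ s ⊆ convexHull ℝ (s ∪ negBasisVertices N) :=
    convexHull_mono subset_union_left
  have hq : w - (p - w) ∈ convexHull ℝ (s ∪ negBasisVertices N) :=
    convexHull_min (insert_subset (hsub hw) (subset_union_right.trans (subset_convexHull ℝ _)))
      (convex_convexHull ℝ _) hN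
  have hseg : w ∈ openSegment ℝ p (w - (p - w)) :=
    ⟨1 / 2, 1 / 2, by norm_num, by norm_num, by norm_num, by module⟩
  have hpw : p = w := hext.2 (hsub hp) hq hseg
  exact (hwp (Classical.arbitrary ι)).ne' (by rw [hpw])

lemma eventually_isNonnegMaximizer_of_mem_extremePoints [Nonempty ι]
    {s : Set (EuclideanSpace ℝ ι)} {w : EuclideanSpace ℝ ι} (hw : w ∈ convexHull ℝ s) :
    ∀ᶠ N in atTop, w ∈ (convexHull ℝ (s ∪ negBasisVertices N)).extremePoints ℝ →
      IsNonnegMaximizer (convexHull ℝ s) w := by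
  by_cases h : IsNonnegMaximizer (convexHull ℝ s) w
  · exact .of_forall fun _ _ => h
  · obtain ⟨p, hp, hwp⟩ := exists_forall_lt_of_not_isNonnegMaximizer (convex_convexHull ℝ s) hw h
    exact (eventually_notMem_extremePoints_of_lt hw hp hwp).mono fun _ hN hext => (hN hext).elim

lemma eventually_mem_of_mem_convexHull_of_mem_extremePoints {s : Set (EuclideanSpace ℝ ι)}
    (hs : Bornology.IsBounded s) :
    ∀ᶠ N in atTop, ∀ w ∈ convexHull ℝ s,
      w ∈ (convexHull ℝ (s ∪ negBasisVertices N)).extremePoints ℝ → w ∈ s := by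
  obtain ⟨C, hC⟩ := isBounded_iff_forall_norm_le.1 (isBounded_convexHull.2 hs)
  filter_upwards [eventually_gt_atTop (max C 0)] with N hN w hw hext
  obtain hws | ⟨j, rfl⟩ := extremePoints_convexHull_subset hext
  · exact hws
  · have := hC _ hw
    rw [norm_smul, PiLp.norm_single, norm_one, mul_one, Real.norm_eq_abs,
      abs_neg, abs_of_pos (lt_of_le_of_lt (le_max_right C 0) hN)] at this
    exact absurd this (not_le.2 (lt_of_le_of_lt (le_max_left C 0) hN))

end

theorem not_vertex_of_QN_of_not_on_nonneg_envelope_general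
    (d : ℕ) (hd : 0 < d)
    (V : Finset (EuclideanSpace ℝ (Fin d)))
    (v : EuclideanSpace ℝ (Fin d))
    (hv : v ∈ convexHull ℝ (V : Set (EuclideanSpace ℝ (Fin d))))
    (hnotmax : ∀ c : EuclideanSpace ℝ (Fin d), c ≠ 0 → (∀ j : Fin d, 0 ≤ c j) →
      ∃ x ∈ convexHull ℝ (V : Set (EuclideanSpace ℝ (Fin d))), ⟪c, v⟫ < ⟪c, x⟫) :
    ∃ N₀ : ℝ, 0 < N₀ ∧ ∀ N : ℝ, N₀ ≤ N →
      (v ∉ Set.extremePoints ℝ (convexHull ℝ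
        ((V : Set (EuclideanSpace ℝ (Fin d))) ∪
          Set.range (fun j : Fin d =>
            (-N : ℝ) • (EuclideanSpace.single j (1 : ℝ)))))) ∧
      (∀ w ∈ convexHull ℝ (V : Set (EuclideanSpace ℝ (Fin d))),
        w ∈ Set.extremePoints ℝ (convexHull ℝ
          ((V : Set (EuclideanSpace ℝ (Fin d))) ∪
            Set.range (fun j : Fin d =>
              (-N : ℝ) • (EuclideanSpace.single j (1 : ℝ))))) →
        ∃ c : EuclideanSpace ℝ (Fin d), c ≠ 0 ∧ (∀ j : Fin d, 0 ≤ c j) ∧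
          ∀ x ∈ convexHull ℝ (V : Set (EuclideanSpace ℝ (Fin d))),
            ⟪c, x⟫ ≤ ⟪c, w⟫) := by
  have : Nonempty (Fin d) := ⟨⟨0, hd⟩⟩
  have hv_not : ¬ IsNonnegMaximizer (convexHull ℝ (V : Set (EuclideanSpace ℝ (Fin d)))) v :=
    fun ⟨c, hc0, hc, hmax⟩ => let ⟨x, hx, hlt⟩ := hnotmax c hc0 hc; (hmax x hx).not_gt hlt
  obtain ⟨p, hp, hvp⟩ :=
    exists_forall_lt_of_not_isNonnegMaximizer (convex_convexHull ℝ _) hv hv_not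
  have hvertices := (eventually_all_finset V).2 fun w hw =>
    eventually_isNonnegMaximizer_of_mem_extremePoints (subset_convexHull ℝ _ hw)
  have hbounded := V.finite_toSet.isBounded
  obtain ⟨N₀, hN₀⟩ := eventually_atTop.1 <| (eventually_notMem_extremePoints_of_lt hv hp hvp).and
    (hvertices.and (eventually_mem_of_mem_convexHull_of_mem_extremePoints hbounded))
  refine ⟨max N₀ 1, by positivity, fun N hN => ?_⟩
  obtain ⟨hvN, hvertN, hmemN⟩ := hN₀ N (le_of_max_le_left hN)
  exact ⟨hvN, fun w hw hext => hvertN w (hmemN w hw hext) hext⟩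

/-- Second half of Lemma 4.1: if `v ∈ P = conv V` does not weakly maximize any
nonzero nonnegative functional over `P` (i.e. `v` is not on the non-negative
envelope of `P`), then for all sufficiently large `N`, `v` is not an extreme
point of `Q_N = conv (P ∪ {-N e₁, …, -N e_d})`.  Equivalently, for `N`
sufficiently large, every point of `P` that is an extreme point of `Q_N` weakly
maximizes some nonzero nonnegative functional over `P`. -/
theorem not_vertex_of_QN_of_not_on_nonneg_envelope
    (d : ℕ) (hd : 0 < d)
    (V : Finset (EuclideanSpace ℝ (Fin d))) (hV : V.Nonempty)
    (v : EuclideanSpace ℝ (Fin d))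
    (hv : v ∈ convexHull ℝ (V : Set (EuclideanSpace ℝ (Fin d))))
    (hnotmax : ∀ c : EuclideanSpace ℝ (Fin d), c ≠ 0 → (∀ j : Fin d, 0 ≤ c j) →
      ∃ x ∈ convexHull ℝ (V : Set (EuclideanSpace ℝ (Fin d))), ⟪c, v⟫ < ⟪c, x⟫) :
    ∃ N₀ : ℝ, 0 < N₀ ∧ ∀ N : ℝ, N₀ ≤ N →
      (v ∉ Set.extremePoints ℝ (convexHull ℝ
        ((V : Set (EuclideanSpace ℝ (Fin d))) ∪
          Set.range (fun j : Fin d =>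
            (-N : ℝ) • (EuclideanSpace.single j (1 : ℝ)))))) ∧
      (∀ w ∈ convexHull ℝ (V : Set (EuclideanSpace ℝ (Fin d))),
        w ∈ Set.extremePoints ℝ (convexHull ℝ
          ((V : Set (EuclideanSpace ℝ (Fin d))) ∪
            Set.range (fun j : Fin d =>
              (-N : ℝ) • (EuclideanSpace.single j (1 : ℝ))))) →
        ∃ c : EuclideanSpace ℝ (Fin d), c ≠ 0 ∧ (∀ j : Fin d, 0 ≤ c j) ∧
          ∀ x ∈ convexHull ℝ (V : Set (EuclideanSpace ℝ (Fin d))),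
            ⟪c, x⟫ ≤ ⟪c, w⟫) :=
  not_vertex_of_QN_of_not_on_nonneg_envelope_general d hd V v hv hnotmax
end

section
/- Interior-point strengthening in the proof of Lemma 4.1: let v ∈ P and suppose there exists x ∈ P with x_j > v_j for every coordinate j = 1, ..., d. Then there exists N₀ > 0 such that for every N ≥ N₀, v lies in the interior of Q_N = conv(P ∪ {-N e_1, ..., -N e_d}); in particular v can be written as a convex combination of x and the points -N e_1, ..., -N e_d with all coefficients strictly positive. -/
/-!
For fixed `N`, the points `x, -N e₁, …, -N e_d` form a simplex whose barycentric
coordinates are explicit affine (hence continuous) functions of `y`. At `y = v` the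
coordinate of `x` tends to `1` and `N` times the coordinate of `-N e_j` tends to
`x_j - v_j > 0` as `N → ∞`, so for large `N` all coordinates of `v` are positive. The set
where they are all positive is open and, since `x ∈ P`, contained in `Q_N`; it contains `v`.
-/

open Filter

theorem Convex.smul_add_sum_smul_mem {E ι : Type*} [AddCommGroup E] [Module ℝ E] [Fintype ι]
    {C : Set E} (hC : Convex ℝ C) {x : E} {b : ι → E} {t : ℝ} {w : ι → ℝ}
    (hx : x ∈ C) (hb : ∀ i, b i ∈ C) (ht : 0 ≤ t) (hw : ∀ i, 0 ≤ w i)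
    (hsum : t + ∑ i, w i = 1) : t • x + ∑ i, w i • b i ∈ C := by
  simpa [Fintype.sum_option] using
    hC.sum_mem (t := Finset.univ) (w := fun o : Option ι => o.elim t w)
      (z := fun o => o.elim x b) (by rintro (_ | i) _ <;> simp [ht, hw])
      (by simpa [Fintype.sum_option] using hsum) (by rintro (_ | i) _ <;> simp [hx, hb])

namespace AxisSimplex

variable {d : ℕ} (x : EuclideanSpace ℝ (Fin d)) (N : ℝ)

/-- Barycentric coordinate of `y` at the vertex `x` of the simplex `x, -N e₁, …, -N e_d`. -/
noncomputable def apexCoord (y : EuclideanSpace ℝ (Fin d)) : ℝ :=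
  (N + ∑ j, y j) / (N + ∑ j, x j)

/-- Barycentric coordinate of `y` at the vertex `-N e_j` of the simplex
`x, -N e₁, …, -N e_d`. -/
noncomputable def axisCoord (y : EuclideanSpace ℝ (Fin d)) (j : Fin d) : ℝ :=
  (apexCoord x N y * x j - y j) / N

theorem apexCoord_add_sum_axisCoord (hN : N ≠ 0) (hNx : N + ∑ j, x j ≠ 0)
    (y : EuclideanSpace ℝ (Fin d)) : apexCoord x N y + ∑ j, axisCoord x N y j = 1 := by
  simp only [axisCoord, ← Finset.sum_div, Finset.sum_sub_distrib, ← Finset.mul_sum, apexCoord]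
  field_simp
  ring

theorem eq_apexCoord_smul_add_sum_axisCoord_smul (hN : N ≠ 0) (y : EuclideanSpace ℝ (Fin d)) :
    y = apexCoord x N y • x +
      ∑ j, axisCoord x N y j • ((-N : ℝ) • EuclideanSpace.single j (1 : ℝ)) := by
  ext k
  simp [axisCoord, Finset.sum_apply, Pi.single_apply, hN]

theorem continuous_apexCoord : Continuous (apexCoord x N) :=
  (continuous_const.add (continuous_finsetSum _ fun j _ => PiLp.continuous_apply 2 _ j)).div_const _

theorem continuous_axisCoord (j : Fin d) : Continuous fun y => axisCoord x N y j :=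
  (((continuous_apexCoord x N).mul continuous_const).sub (PiLp.continuous_apply 2 _ j)).div_const _

theorem mem_interior_convexHull_of_coord_pos {S : Set (EuclideanSpace ℝ (Fin d))}
    (hx : x ∈ convexHull ℝ S)
    (haxis : ∀ j, (-N : ℝ) • EuclideanSpace.single j (1 : ℝ) ∈ S)
    (hN : N ≠ 0) (hNx : N + ∑ j, x j ≠ 0) {y : EuclideanSpace ℝ (Fin d)}
    (hapex : 0 < apexCoord x N y) (hcoord : ∀ j, 0 < axisCoord x N y j) :
    y ∈ interior (convexHull ℝ S) := by
  let U := {z | 0 < apexCoord x N z} ∩ ⋂ j, {z | 0 < axisCoord x N z j}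
  have hU : IsOpen U :=
    (isOpen_lt continuous_const (continuous_apexCoord x N)).inter
      (isOpen_iInter_of_finite fun j =>
        isOpen_lt continuous_const (continuous_axisCoord x N j))
  have hUS : U ⊆ convexHull ℝ S := by
    rintro z ⟨hz, hzj⟩
    rw [eq_apexCoord_smul_add_sum_axisCoord_smul x N hN z]
    exact (convex_convexHull ℝ S).smul_add_sum_smul_mem hx
      (fun j => subset_convexHull ℝ S (haxis j)) hz.le
      (fun j => (Set.mem_iInter.1 hzj j).le) (apexCoord_add_sum_axisCoord x N hN hNx z)
  exact interior_maximal hUS hU ⟨hapex, Set.mem_iInter.2 hcoord⟩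

theorem eventually_coord_pos {v : EuclideanSpace ℝ (Fin d)} (hdom : ∀ j, v j < x j) :
    ∀ᶠ N in atTop, 0 < N ∧ 0 < N + ∑ j, x j ∧
      0 < apexCoord x N v ∧ ∀ j, 0 < axisCoord x N v j := by
  set sx := ∑ j, x j with hsx
  set sv := ∑ j, v j with hsv
  filter_upwards [eventually_gt_atTop 0, eventually_gt_atTop (-sx), eventually_gt_atTop (-sv),
    eventually_all.2 fun j => eventually_gt_atTop ((sx * v j - sv * x j) / (x j - v j))]
    with N hN hNx hNv hNj
  have hNx' : 0 < N + sx := by linarith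
  refine ⟨hN, hNx', div_pos (by linarith) hNx', fun j => ?_⟩
  have hgap := (div_lt_iff₀ (sub_pos.2 (hdom j))).1 (hNj j)
  have hnum : apexCoord x N v * x j - v j =
      (N * (x j - v j) - (sx * v j - sv * x j)) / (N + sx) := by
    rw [apexCoord, ← hsx, ← hsv]
    field_simp
    ring
  exact div_pos (hnum ▸ div_pos (by linarith) hNx') hN

end AxisSimplex

open AxisSimplex

theorem interior_of_QN_of_dominated_general
    (d : ℕ)
    (V : Finset (EuclideanSpace ℝ (Fin d)))
    (v : EuclideanSpace ℝ (Fin d))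
    (x : EuclideanSpace ℝ (Fin d))
    (hx : x ∈ convexHull ℝ (V : Set (EuclideanSpace ℝ (Fin d))))
    (hdom : ∀ j : Fin d, v j < x j) :
    ∃ N₀ : ℝ, 0 < N₀ ∧ ∀ N : ℝ, N₀ ≤ N →
      v ∈ interior (convexHull ℝ
        ((V : Set (EuclideanSpace ℝ (Fin d))) ∪
          Set.range (fun j : Fin d =>
            (-N : ℝ) • (EuclideanSpace.single j (1 : ℝ))))) ∧
      ∃ (t : ℝ) (w : Fin d → ℝ), 0 < t ∧ (∀ j : Fin d, 0 < w j) ∧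
        t + ∑ j : Fin d, w j = 1 ∧
        v = t • x + ∑ j : Fin d, w j • ((-N : ℝ) • (EuclideanSpace.single j (1 : ℝ))) := by
  obtain ⟨N₁, hN₁⟩ := eventually_atTop.1 (eventually_coord_pos x hdom)
  refine ⟨max N₁ 1, by positivity, fun N hN => ?_⟩
  obtain ⟨hN, hNx, hapex, haxis⟩ := hN₁ N (le_of_max_le_left hN)
  refine ⟨mem_interior_convexHull_of_coord_pos x N
      (convexHull_mono Set.subset_union_left hx)
      (fun j => Set.mem_union_right _ (Set.mem_range_self j))
      hN.ne' hNx.ne' hapex haxis, apexCoord x N v, axisCoord x N v, hapex, haxis,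
    apexCoord_add_sum_axisCoord x N hN.ne' hNx.ne' v,
    eq_apexCoord_smul_add_sum_axisCoord_smul x N hN.ne' v⟩

/-- Interior-point strengthening in the proof of Lemma 4.1: if `v ∈ P = conv V`
is strictly dominated in every coordinate by some `x ∈ P`, then for all
sufficiently large `N`, `v` lies in the interior of
`Q_N = conv (P ∪ {-N e₁, …, -N e_d})`; in particular `v` is a convex combination
of `x` and the points `-N e₁, …, -N e_d` with all coefficients strictly
positive. -/
theorem interior_of_QN_of_dominated
    (d : ℕ) (hd : 0 < d)
    (V : Finset (EuclideanSpace ℝ (Fin d))) (hV : V.Nonempty)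
    (v : EuclideanSpace ℝ (Fin d))
    (hv : v ∈ convexHull ℝ (V : Set (EuclideanSpace ℝ (Fin d))))
    (x : EuclideanSpace ℝ (Fin d))
    (hx : x ∈ convexHull ℝ (V : Set (EuclideanSpace ℝ (Fin d))))
    (hdom : ∀ j : Fin d, v j < x j) :
    ∃ N₀ : ℝ, 0 < N₀ ∧ ∀ N : ℝ, N₀ ≤ N →
      v ∈ interior (convexHull ℝ
        ((V : Set (EuclideanSpace ℝ (Fin d))) ∪
          Set.range (fun j : Fin d =>
            (-N : ℝ) • (EuclideanSpace.single j (1 : ℝ))))) ∧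
      ∃ (t : ℝ) (w : Fin d → ℝ), 0 < t ∧ (∀ j : Fin d, 0 < w j) ∧
        t + ∑ j : Fin d, w j = 1 ∧
        v = t • x + ∑ j : Fin d, w j • ((-N : ℝ) • (EuclideanSpace.single j (1 : ℝ))) :=
  interior_of_QN_of_dominated_general d V v x hx hdom
end
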